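/- arXiv:1304.1839 — 7 statements merged into one kernel-verified Lean document; each statement's English description precedes it below -/
import Mathlib

section
/- The following are equivalent: (i) the map α is injective up to a global phase; (ii) there exists a constant a₀ > 0 such that for all u, v ∈ ℂⁿ, Σ_{k=1}^m ( Re(⟨u,f_k⟩⟨f_k,v⟩) )² ≥ a₀ · ( ‖u‖²‖v‖² − (Im⟨u,v⟩)² ). -/
open scoped BigOperators ComplexConjugate
open Matrix

noncomputable section

/-- Inner product on `ℂⁿ`, linear in the first argument: `⟨x,y⟩ = ∑ⱼ xⱼ conj(yⱼ)`. -/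
def cip {n : ℕ} (x y : Fin n → ℂ) : ℂ := ∑ j, x j * (starRingEnd ℂ) (y j)

/-- Squared Euclidean norm on `ℂⁿ`. -/
def cnSq {n : ℕ} (x : Fin n → ℂ) : ℝ := ∑ j, Complex.normSq (x j)

/-- The phaseless measurement map `α(x)ₖ = |⟨x,fₖ⟩|²`. -/
def alphaMap {n m : ℕ} (f : Fin m → Fin n → ℂ) (x : Fin n → ℂ) : Fin m → ℝ :=
  fun k => Complex.normSq (cip x (f k))

/-- `α` is injective up to a global phase. -/
def InjUpToPhase {n m : ℕ} (f : Fin m → Fin n → ℂ) : Prop :=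
  ∀ x y : Fin n → ℂ, alphaMap f x = alphaMap f y → ∃ c : ℂ, ‖c‖ = 1 ∧ y = c • x

/-!
Polarization gives `Re(⟨x+y, f⟩⟨f, x-y⟩) = |⟨x, f⟩|² - |⟨y, f⟩|²`, so `α(x) = α(y)` exactly when
the sum `S(u, v) = ∑ₖ Re(⟨u, fₖ⟩⟨fₖ, v⟩)²` vanishes at `(u, v) = (x + y, x - y)`. On the other
side, `Q(u, v) = ‖u‖²‖v‖² - (Im⟨u, v⟩)²` equals `(‖x‖² + ‖y‖²)² - 4|⟨x, y⟩|²` there, which by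
Cauchy–Schwarz vanishes exactly when `y = c x` with `|c| = 1`. So injectivity up to phase says
that `S` vanishes only where `Q` does.

To make this quantitative, note that `S` and `Q` are both unchanged by the shear `v ↦ v + i t u`
(`t` real) and both scale by `r²` under real scalings of either argument. Shearing `v` until
`Im⟨u, v⟩ = 0` and normalizing reduces the inequality `a₀ Q ≤ S` to `a₀ ≤ S` on the compact set
`‖u‖ = ‖v‖ = 1, Im⟨u, v⟩ = 0`, where `Q = 1`; there `S` is continuous and positive, so it has a
positive minimum.
-/

open scoped InnerProductSpace
open Complex

theorem Complex.re_add_mul_conj_sub (a b : ℂ) :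
    ((a + b) * (conj a - conj b)).re = ‖a‖ ^ 2 - ‖b‖ ^ 2 := by
  simp only [Complex.sq_norm, normSq_apply, mul_re, add_re, add_im, sub_re, sub_im, conj_re,
    conj_im]
  ring

namespace PhaseRetrieval

variable {E : Type*} [NormedAddCommGroup E] [InnerProductSpace ℂ E] {ι : Type*} [Fintype ι]

def IsInjectiveUpToPhase (f : ι → E) : Prop :=
  ∀ x y : E, (∀ k, ‖⟪f k, x⟫_ℂ‖ = ‖⟪f k, y⟫_ℂ‖) → ∃ c : ℂ, ‖c‖ = 1 ∧ y = c • x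

-- Mathlib's inner product is conjugate-linear in the first slot, so the paper's `⟨u, v⟩` is
-- `⟪v, u⟫_ℂ`.
def crossSqSum (f : ι → E) (u v : E) : ℝ := ∑ k, (⟪f k, u⟫_ℂ * ⟪v, f k⟫_ℂ).re ^ 2

def gapForm (u v : E) : ℝ := ‖u‖ ^ 2 * ‖v‖ ^ 2 - (⟪v, u⟫_ℂ).im ^ 2

theorem crossSqSum_nonneg (f : ι → E) (u v : E) : 0 ≤ crossSqSum f u v :=
  Finset.sum_nonneg fun _ _ => sq_nonneg _

theorem crossSqSum_add_sub_eq_zero_iff (f : ι → E) (x y : E) :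
    crossSqSum f (x + y) (x - y) = 0 ↔ ∀ k, ‖⟪f k, x⟫_ℂ‖ = ‖⟪f k, y⟫_ℂ‖ := by
  have polar : ∀ k, (⟪f k, x + y⟫_ℂ * ⟪x - y, f k⟫_ℂ).re =
      ‖⟪f k, x⟫_ℂ‖ ^ 2 - ‖⟪f k, y⟫_ℂ‖ ^ 2 := fun k => by
    rw [inner_add_right, inner_sub_left, ← inner_conj_symm x, ← inner_conj_symm y,
      re_add_mul_conj_sub]
  simp only [crossSqSum, polar, Finset.sum_eq_zero_iff_of_nonneg (fun _ _ => sq_nonneg _),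
    Finset.mem_univ, true_imp_iff, sq_eq_zero_iff, sub_eq_zero]
  exact forall_congr' fun k => (pow_left_inj₀ (norm_nonneg _) (norm_nonneg _) two_ne_zero)

theorem gapForm_nonneg (u v : E) : 0 ≤ gapForm u v := by
  rw [gapForm, sub_nonneg, ← mul_pow, mul_comm, ← sq_abs]
  exact pow_le_pow_left₀ (abs_nonneg _) ((abs_im_le_norm _).trans (norm_inner_le_norm v u)) 2

theorem gapForm_add_sub (x y : E) :
    gapForm (x + y) (x - y) = (‖x‖ ^ 2 + ‖y‖ ^ 2) ^ 2 - 4 * ‖⟪x, y⟫_ℂ‖ ^ 2 := by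
  have him : (⟪x - y, x + y⟫_ℂ).im = 2 * (⟪x, y⟫_ℂ).im := by
    have hself := fun z : E => inner_self_im (𝕜 := ℂ) z
    simp only [RCLike.im_to_complex] at hself
    rw [inner_sub_left, inner_add_right, inner_add_right, ← inner_conj_symm y x]
    simp only [sub_im, add_im, conj_im, hself]
    ring
  rw [gapForm, him, norm_add_sq (𝕜 := ℂ), norm_sub_sq (𝕜 := ℂ), Complex.sq_norm, normSq_apply]
  simp only [RCLike.re_to_complex]
  ring

theorem gapForm_add_sub_eq_zero_iff (x y : E) :
    gapForm (x + y) (x - y) = 0 ↔ ∃ c : ℂ, ‖c‖ = 1 ∧ y = c • x := by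
  rw [gapForm_add_sub, sub_eq_zero]
  constructor
  · intro h
    have hcs := norm_inner_le_norm (𝕜 := ℂ) x y
    have hsq : ‖x‖ ^ 2 = ‖y‖ ^ 2 := by
      nlinarith [sq_nonneg (‖x‖ ^ 2 - ‖y‖ ^ 2), norm_nonneg ⟪x, y⟫_ℂ]
    have hxy : ‖x‖ = ‖y‖ := (pow_left_inj₀ (norm_nonneg _) (norm_nonneg _) two_ne_zero).1 hsq
    have heq : ‖⟪x, y⟫_ℂ‖ = ‖x‖ * ‖y‖ := by
      refine (pow_left_inj₀ (norm_nonneg _) (by positivity) two_ne_zero).1 ?_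
      rw [← hxy] at h ⊢
      linarith
    rcases ((norm_inner_eq_norm_tfae ℂ x y).out 0 2).1 heq with rfl | ⟨r, rfl⟩
    · rw [norm_zero, eq_comm, norm_eq_zero] at hxy
      exact ⟨1, norm_one, by rw [hxy, smul_zero]⟩
    · rcases eq_or_ne x 0 with rfl | hx
      · exact ⟨1, norm_one, by rw [smul_zero, smul_zero]⟩
      · rw [norm_smul, eq_comm] at hxy
        exact ⟨r, (mul_eq_right₀ (norm_ne_zero_iff.2 hx)).1 hxy, rfl⟩
  · rintro ⟨c, hc, rfl⟩
    rw [norm_smul, hc, inner_smul_right, norm_mul, hc, ← inner_self_re_eq_norm,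
      inner_self_eq_norm_sq]
    ring

theorem isInjectiveUpToPhase_iff (f : ι → E) :
    IsInjectiveUpToPhase f ↔ ∀ u v : E, crossSqSum f u v = 0 → gapForm u v = 0 := by
  constructor
  · intro hf u v huv
    obtain ⟨x, y, rfl, rfl⟩ : ∃ x y : E, x + y = u ∧ x - y = v :=
      ⟨(2⁻¹ : ℂ) • (u + v), (2⁻¹ : ℂ) • (u - v), by module, by module⟩
    exact (gapForm_add_sub_eq_zero_iff x y).2
      (hf x y ((crossSqSum_add_sub_eq_zero_iff f x y).1 huv))
  · intro h x y hxy
    exact (gapForm_add_sub_eq_zero_iff x y).1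
      (h _ _ ((crossSqSum_add_sub_eq_zero_iff f x y).2 hxy))

theorem crossSqSum_ofReal_smul_left (f : ι → E) (r : ℝ) (u v : E) :
    crossSqSum f ((r : ℂ) • u) v = r ^ 2 * crossSqSum f u v := by
  simp only [crossSqSum, Finset.mul_sum, inner_smul_right, mul_assoc, re_ofReal_mul, mul_pow]

theorem crossSqSum_ofReal_smul_right (f : ι → E) (r : ℝ) (u v : E) :
    crossSqSum f u ((r : ℂ) • v) = r ^ 2 * crossSqSum f u v := by
  simp only [crossSqSum, Finset.mul_sum, inner_smul_left, conj_ofReal, mul_left_comm _ (r : ℂ),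
    re_ofReal_mul, mul_pow]

theorem gapForm_ofReal_smul_left (r : ℝ) (u v : E) :
    gapForm ((r : ℂ) • u) v = r ^ 2 * gapForm u v := by
  simp only [gapForm, norm_smul, norm_real, Real.norm_eq_abs, inner_smul_right, im_ofReal_mul]
  rw [mul_pow, sq_abs]
  ring

theorem gapForm_ofReal_smul_right (r : ℝ) (u v : E) :
    gapForm u ((r : ℂ) • v) = r ^ 2 * gapForm u v := by
  simp only [gapForm, norm_smul, norm_real, Real.norm_eq_abs, inner_smul_left, conj_ofReal,
    im_ofReal_mul]
  rw [mul_pow, sq_abs]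
  ring

theorem crossSqSum_add_smul_right (f : ι → E) (u v : E) {c : ℂ} (hc : c.re = 0) :
    crossSqSum f u (v + c • u) = crossSqSum f u v := by
  have h : ∀ k, ⟪f k, u⟫_ℂ * ⟪u, f k⟫_ℂ = (‖⟪f k, u⟫_ℂ‖ ^ 2 : ℝ) := fun k => by
    rw [← inner_conj_symm u, mul_conj', ofReal_pow]
  simp only [crossSqSum, inner_add_left, inner_smul_left, mul_add, mul_left_comm _ (conj c), h,
    add_re, re_mul_ofReal, conj_re, hc, zero_mul, add_zero]

theorem im_inner_add_smul_eq_zero {u : E} (hu : ‖u‖ = 1) (v : E) :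
    (⟪v + ((⟪v, u⟫_ℂ).im * I) • u, u⟫_ℂ).im = 0 := by
  rw [inner_add_left, inner_smul_left, inner_self_eq_norm_sq_to_K, hu]
  simp

theorem gapForm_eq_norm_add_smul_sq {u : E} (hu : ‖u‖ = 1) (v : E) :
    gapForm u v = ‖v + ((⟪v, u⟫_ℂ).im * I) • u‖ ^ 2 := by
  rw [gapForm, norm_add_sq (𝕜 := ℂ), norm_smul, inner_smul_right, hu]
  simp only [one_pow, one_mul, RCLike.mul_re, RCLike.re_to_complex, ofReal_re, I_re, mul_zero,
    RCLike.im_to_complex, ofReal_im, I_im, mul_one, sub_self, zero_mul, RCLike.mul_im, zero_sub,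
    mul_neg, Complex.norm_mul, norm_real, Real.norm_eq_abs, norm_I, sq_abs]
  ring

theorem mul_gapForm_le_crossSqSum_of_norm_eq_one (f : ι → E) {a : ℝ}
    (ha : ∀ u w : E, ‖u‖ = 1 → ‖w‖ = 1 → (⟪w, u⟫_ℂ).im = 0 → a ≤ crossSqSum f u w)
    {u : E} (hu : ‖u‖ = 1) (v : E) : a * gapForm u v ≤ crossSqSum f u v := by
  rw [gapForm_eq_norm_add_smul_sq hu, ← crossSqSum_add_smul_right f u v (c := (⟪v, u⟫_ℂ).im * I)
    (by simp)]
  have him₀ := im_inner_add_smul_eq_zero hu v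
  generalize v + ((⟪v, u⟫_ℂ).im * I) • u = w at him₀ ⊢
  rcases eq_or_ne w 0 with rfl | hw
  · rw [norm_zero]
    simpa using crossSqSum_nonneg f u 0
  have hw₁ : ‖((‖w‖⁻¹ : ℝ) : ℂ) • w‖ = 1 := by
    rw [ofReal_inv]; exact norm_smul_inv_norm hw
  have him : (⟪((‖w‖⁻¹ : ℝ) : ℂ) • w, u⟫_ℂ).im = 0 := by
    rw [inner_smul_left, conj_ofReal, im_ofReal_mul, him₀, mul_zero]
  calc a * ‖w‖ ^ 2 ≤ crossSqSum f u (((‖w‖⁻¹ : ℝ) : ℂ) • w) * ‖w‖ ^ 2 :=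
        mul_le_mul_of_nonneg_right (ha _ _ hu hw₁ him) (sq_nonneg _)
    _ = crossSqSum f u w := by
        rw [crossSqSum_ofReal_smul_right]
        field_simp

theorem mul_gapForm_le_crossSqSum (f : ι → E) {a : ℝ}
    (ha : ∀ u w : E, ‖u‖ = 1 → ‖w‖ = 1 → (⟪w, u⟫_ℂ).im = 0 → a ≤ crossSqSum f u w)
    (u v : E) : a * gapForm u v ≤ crossSqSum f u v := by
  rcases eq_or_ne u 0 with rfl | hu
  · simp [gapForm, crossSqSum]
  obtain ⟨u₁, hu₁, hu_eq⟩ : ∃ u₁ : E, ‖u₁‖ = 1 ∧ ((‖u‖ : ℝ) : ℂ) • u₁ = u :=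
    ⟨(‖u‖⁻¹ : ℂ) • u, norm_smul_inv_norm hu, by
      rw [smul_smul, mul_inv_cancel₀ (ofReal_ne_zero.2 (norm_ne_zero_iff.2 hu)), one_smul]⟩
  rw [← hu_eq, gapForm_ofReal_smul_left, crossSqSum_ofReal_smul_left, mul_left_comm]
  exact mul_le_mul_of_nonneg_left (mul_gapForm_le_crossSqSum_of_norm_eq_one f ha hu₁ v)
    (sq_nonneg _)

theorem continuous_crossSqSum (f : ι → E) :
    Continuous fun p : E × E => crossSqSum f p.1 p.2 := by
  unfold crossSqSum
  fun_prop

theorem exists_pos_le_crossSqSum [FiniteDimensional ℂ E] (f : ι → E)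
    (hf : ∀ u v : E, crossSqSum f u v = 0 → gapForm u v = 0) :
    ∃ a > 0, ∀ u w : E, ‖u‖ = 1 → ‖w‖ = 1 → (⟪w, u⟫_ℂ).im = 0 → a ≤ crossSqSum f u w := by
  have := FiniteDimensional.proper_rclike ℂ E
  set K := {p : E × E | ‖p.1‖ = 1 ∧ ‖p.2‖ = 1 ∧ (⟪p.2, p.1⟫_ℂ).im = 0}
  have hK : IsCompact K := by
    refine ((isCompact_sphere (0 : E) 1).prod (isCompact_sphere (0 : E) 1)).of_isClosed_subset
      ?_ fun p hp => ⟨mem_sphere_zero_iff_norm.2 hp.1, mem_sphere_zero_iff_norm.2 hp.2.1⟩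
    exact (isClosed_eq (by fun_prop) continuous_const).inter
      ((isClosed_eq (by fun_prop) continuous_const).inter
        (isClosed_eq (by fun_prop) continuous_const))
  have hpos : ∀ p ∈ K, 0 < crossSqSum f p.1 p.2 := by
    rintro ⟨u, w⟩ ⟨hu, hw, him⟩
    refine (crossSqSum_nonneg f u w).lt_of_ne' fun h => ?_
    have := hf u w h
    simp [gapForm, hu, hw, him] at this
  obtain ⟨a, ha, hle⟩ := hK.exists_forall_le' (continuous_crossSqSum f).continuousOn hpos
  exact ⟨a, ha, fun u w hu hw him => hle (u, w) ⟨hu, hw, him⟩⟩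

theorem isInjectiveUpToPhase_iff_exists_mul_gapForm_le [FiniteDimensional ℂ E] (f : ι → E) :
    IsInjectiveUpToPhase f ↔
      ∃ a₀ : ℝ, 0 < a₀ ∧ ∀ u v : E, a₀ * gapForm u v ≤ crossSqSum f u v := by
  rw [isInjectiveUpToPhase_iff]
  constructor
  · intro hf
    obtain ⟨a, ha, hle⟩ := exists_pos_le_crossSqSum f hf
    exact ⟨a, ha, mul_gapForm_le_crossSqSum f hle⟩
  · rintro ⟨a, ha, hle⟩ u v huv
    have h := hle u v
    rw [huv] at h
    exact le_antisymm (nonpos_of_mul_nonpos_right h ha) (gapForm_nonneg u v)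

end PhaseRetrieval

open PhaseRetrieval

section EuclideanCoordinates

variable {n m : ℕ}

theorem cip_eq_inner (u v : Fin n → ℂ) :
    cip u v = ⟪(WithLp.toLp 2 v : EuclideanSpace ℂ (Fin n)), WithLp.toLp 2 u⟫_ℂ := by
  simp only [cip, PiLp.inner_apply, RCLike.inner_apply]

theorem cnSq_eq_norm_sq (u : Fin n → ℂ) :
    cnSq u = ‖(WithLp.toLp 2 u : EuclideanSpace ℂ (Fin n))‖ ^ 2 := by
  simp [cnSq, EuclideanSpace.norm_sq_eq, Complex.sq_norm]

theorem alphaMap_eq_alphaMap_iff (f : Fin m → Fin n → ℂ) (x y : Fin n → ℂ) :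
    alphaMap f x = alphaMap f y ↔
      ∀ k, ‖⟪(WithLp.toLp 2 (f k) : EuclideanSpace ℂ (Fin n)), WithLp.toLp 2 x⟫_ℂ‖ =
        ‖⟪(WithLp.toLp 2 (f k) : EuclideanSpace ℂ (Fin n)), WithLp.toLp 2 y⟫_ℂ‖ := by
  simp only [funext_iff, alphaMap, ← Complex.sq_norm, cip_eq_inner]
  exact forall_congr' fun k => pow_left_inj₀ (norm_nonneg _) (norm_nonneg _) two_ne_zero

theorem injUpToPhase_iff (f : Fin m → Fin n → ℂ) :
    InjUpToPhase f ↔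
      IsInjectiveUpToPhase fun k => (WithLp.toLp 2 (f k) : EuclideanSpace ℂ (Fin n)) := by
  simp only [InjUpToPhase, IsInjectiveUpToPhase, (WithLp.equiv 2 (Fin n → ℂ)).forall_congr_left,
    alphaMap_eq_alphaMap_iff]
  simp [← WithLp.toLp_smul]

end EuclideanCoordinates

theorem stmt0_general (n m : ℕ) (f : Fin m → Fin n → ℂ) :
    InjUpToPhase f ↔
      ∃ a₀ : ℝ, 0 < a₀ ∧ ∀ u v : Fin n → ℂ,
        a₀ * (cnSq u * cnSq v - (cip u v).im ^ 2)
          ≤ ∑ k, ((cip u (f k) * cip (f k) v).re) ^ 2 := by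
  rw [injUpToPhase_iff, isInjectiveUpToPhase_iff_exists_mul_gapForm_le]
  simp only [(WithLp.equiv 2 (Fin n → ℂ)).forall_congr_left, cip_eq_inner, cnSq_eq_norm_sq]
  rfl

/-- For a frame `F = {f₁,…,f_m}` of `ℂⁿ`, the map `α` is injective up to a
global phase iff there is `a₀ > 0` with
`∑ₖ (Re(⟨u,fₖ⟩⟨fₖ,v⟩))² ≥ a₀ (‖u‖²‖v‖² − (Im⟨u,v⟩)²)` for all `u, v ∈ ℂⁿ`. -/
theorem stmt0 (n m : ℕ) (f : Fin m → Fin n → ℂ)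
    (hspan : Submodule.span ℂ (Set.range f) = ⊤) :
    InjUpToPhase f ↔
      ∃ a₀ : ℝ, 0 < a₀ ∧ ∀ u v : Fin n → ℂ,
        a₀ * (cnSq u * cnSq v - (cip u v).im ^ 2)
          ≤ ∑ k, ((cip u (f k) * cip (f k) v).re) ^ 2 :=
  stmt0_general n m f
end
end

section
/- The map α is injective up to a global phase if and only if for every nonzero ξ ∈ ℝ^{2n}, the matrix R(ξ) has rank exactly 2n − 1. -/
open scoped BigOperators ComplexConjugate
open Matrix

noncomputable section

/-- Identification `ι : ℂⁿ → ℝ²ⁿ`, `ι(x) = (Re x, Im x)`. -/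
def iotaR {n : ℕ} (x : Fin n → ℂ) : Fin n ⊕ Fin n → ℝ :=
  Sum.elim (fun j => (x j).re) (fun j => (x j).im)

/-- The `2n×2n` matrix `J = [[0, −Iₙ],[Iₙ, 0]]`. -/
def Jmat (n : ℕ) : Matrix (Fin n ⊕ Fin n) (Fin n ⊕ Fin n) ℝ :=
  Matrix.fromBlocks 0 (-1) 1 0

/-- `Φₖ = φₖφₖᵀ + Jφₖφₖᵀ Jᵀ` with `φₖ = ι(fₖ)`. -/
def PhiMat {n : ℕ} (fk : Fin n → ℂ) : Matrix (Fin n ⊕ Fin n) (Fin n ⊕ Fin n) ℝ :=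
  Matrix.vecMulVec (iotaR fk) (iotaR fk)
    + Jmat n * Matrix.vecMulVec (iotaR fk) (iotaR fk) * (Jmat n)ᵀ

/-- `R(ξ) = ∑ₖ Φₖ ξξᵀ Φₖ`. -/
def Rmat {n m : ℕ} (f : Fin m → Fin n → ℂ) (ξ : Fin n ⊕ Fin n → ℝ) :
    Matrix (Fin n ⊕ Fin n) (Fin n ⊕ Fin n) ℝ :=
  ∑ k, PhiMat (f k) * Matrix.vecMulVec ξ ξ * PhiMat (f k)

/-!
Put `x = (u + w) / 2`, `y = (u - w) / 2`. Polarization gives `α x - α y = alphaPolar f u w`,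
where `alphaPolar f u` is the real-linear map `w ↦ (Re (⟨u, fₖ⟩ · conj ⟨w, fₖ⟩))ₖ`, and the
Cayley transform `c ↦ (1 - c) / (1 + c)` shows that `y` is a unimodular multiple of `x` iff
`u = 0` or `w ∈ ℝ · iu`. Since `iu` always lies in the kernel of `alphaPolar f u`, injectivity up
to phase means that this kernel is the line `ℝ · iu` for every `u ≠ 0`. In real coordinates
`alphaPolar f u` is the matrix `A = jacobianMat f (ι u)` with rows `Φₖ ι(u)`, and `R(ι u) = AᵀA`,
so `rank R(ι u) = rank A = 2n - dim ker (alphaPolar f u)`.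
-/

lemma Complex.re_one_sub_div_one_add_eq_zero {c : ℂ} (hc : ‖c‖ = 1) :
    ((1 - c) / (1 + c)).re = 0 := by
  have hc' := Complex.sq_norm c
  rw [hc, normSq_apply] at hc'
  rw [div_re, ← add_div]
  convert zero_div _
  simp only [sub_re, add_re, one_re, sub_im, add_im, one_im]
  linear_combination hc'

lemma Complex.norm_one_sub_div_one_add_ofReal_mul_I (t : ℝ) :
    ‖(1 - t * I) / (1 + t * I)‖ = 1 := by
  have h : conj (1 + t * I) = 1 - t * I := by simp [sub_eq_add_neg]
  have h0 : 1 + t * I ≠ 0 := fun h => by simpa using congrArg re h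
  rw [norm_div, ← h, norm_conj, div_self (norm_ne_zero_iff.mpr h0)]

lemma exists_norm_eq_one_smul_iff {V : Type*} [AddCommGroup V] [Module ℂ V] [Module ℝ V]
    [IsScalarTower ℝ ℂ V] {x y : V} :
    (∃ c : ℂ, ‖c‖ = 1 ∧ y = c • x) ↔ x + y = 0 ∨ x - y ∈ ℝ ∙ (Complex.I • (x + y)) := by
  constructor
  · rintro ⟨c, hc, rfl⟩
    by_cases hc1 : c = -1
    · left; simp [hc1]
    · right
      set d := (1 - c) / (1 + c) with hd
      have hd_im : (d.im : ℂ) * Complex.I = d :=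
        Complex.ext (by simp [Complex.re_one_sub_div_one_add_eq_zero hc, d]) (by simp)
      have h1c : 1 + c ≠ 0 := fun h => hc1 (by linear_combination h)
      refine Submodule.mem_span_singleton.mpr ⟨d.im, ?_⟩
      calc d.im • Complex.I • (x + c • x) = (((d.im : ℂ) * Complex.I) * (1 + c)) • x := by
            rw [RCLike.real_smul_eq_coe_smul (K := ℂ)]; module
        _ = x - c • x := by rw [hd_im, hd, div_mul_cancel₀ _ h1c]; module
  · rintro (h | h)
    · exact ⟨-1, by simp, by rw [neg_one_smul, eq_neg_of_add_eq_zero_right h]⟩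
    · obtain ⟨t, ht⟩ := Submodule.mem_span_singleton.mp h
      have h0 : 1 + (t : ℂ) * Complex.I ≠ 0 := fun h => by simpa using congrArg Complex.re h
      refine ⟨_, Complex.norm_one_sub_div_one_add_ofReal_mul_I t, ?_⟩
      have : (1 + (t : ℂ) * Complex.I) • y = (1 - (t : ℂ) * Complex.I) • x := by
        rw [RCLike.real_smul_eq_coe_smul (K := ℂ)] at ht
        linear_combination (norm := module) ht
      rw [div_eq_inv_mul, mul_smul, ← this, inv_smul_smul₀ h0]

lemma Matrix.transpose_mul_self_eq_sum_vecMulVec {R ι κ : Type*} [CommSemiring R] [Fintype ι]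
    (A : Matrix ι κ R) : Aᵀ * A = ∑ k, vecMulVec (A k) (A k) := by
  ext i j
  simp [mul_apply, Matrix.sum_apply, vecMulVec_apply]

lemma finrank_real_pi_complex (n : ℕ) : Module.finrank ℝ (Fin n → ℂ) = 2 * n := by
  simp [Module.finrank_pi_fintype, Complex.finrank_real_complex, mul_comm]

section RealCoordinates

variable {n : ℕ}

lemma cip_eq_dotProduct (x y : Fin n → ℂ) : cip x y = x ⬝ᵥ star y := rfl

lemma cip_smul_right (c : ℂ) (x y : Fin n → ℂ) : cip x (c • y) = conj c * cip x y := by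
  simp [cip_eq_dotProduct, star_smul, dotProduct_smul]

lemma iotaR_dotProduct_iotaR (x y : Fin n → ℂ) : iotaR x ⬝ᵥ iotaR y = (cip x y).re := by
  simp only [dotProduct, cip, Complex.re_sum, Fintype.sum_sum_type, iotaR, Sum.elim_inl,
    Sum.elim_inr, Complex.mul_re, Complex.conj_re, Complex.conj_im, ← Finset.sum_add_distrib]
  exact Finset.sum_congr rfl fun j _ => by ring

variable (n) in
def iotaEquiv : (Fin n → ℂ) ≃ₗ[ℝ] (Fin n ⊕ Fin n → ℝ) where
  toFun := iotaR
  invFun ξ j := ⟨ξ (Sum.inl j), ξ (Sum.inr j)⟩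
  map_add' x y := by ext (j | j) <;> rfl
  map_smul' r x := by ext (j | j) <;> simp [iotaR]
  left_inv x := by ext j; rfl
  right_inv ξ := by ext (j | j) <;> rfl

lemma Jmat_mulVec_iotaR (x : Fin n → ℂ) : Jmat n *ᵥ iotaR x = iotaR (Complex.I • x) := by
  ext (j | j) <;> simp [Jmat, iotaR, mulVec, dotProduct, Fintype.sum_sum_type, one_apply]

lemma PhiMat_eq (g : Fin n → ℂ) :
    PhiMat g = vecMulVec (iotaR g) (iotaR g)
      + vecMulVec (iotaR (Complex.I • g)) (iotaR (Complex.I • g)) := by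
  rw [PhiMat, mul_vecMulVec, vecMulVec_mul, vecMul_transpose, Jmat_mulVec_iotaR]

lemma PhiMat_transpose (g : Fin n → ℂ) : (PhiMat g)ᵀ = PhiMat g := by
  simp only [PhiMat_eq, transpose_add, transpose_vecMulVec]

lemma PhiMat_mulVec_dotProduct (g : Fin n → ℂ) (ξ η : Fin n ⊕ Fin n → ℝ) :
    PhiMat g *ᵥ ξ ⬝ᵥ η = (iotaR g ⬝ᵥ ξ) * (iotaR g ⬝ᵥ η)
      + (iotaR (Complex.I • g) ⬝ᵥ ξ) * (iotaR (Complex.I • g) ⬝ᵥ η) := by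
  simp [PhiMat_eq, add_mulVec, vecMulVec_mulVec, add_dotProduct, smul_dotProduct]

end RealCoordinates

section Polarization

variable {n m : ℕ} (f : Fin m → Fin n → ℂ)

def alphaPolar (u : Fin n → ℂ) : (Fin n → ℂ) →ₗ[ℝ] (Fin m → ℝ) where
  toFun w k := (cip u (f k) * conj (cip w (f k))).re
  map_add' w w' := by ext k; simp [cip_eq_dotProduct, add_dotProduct, mul_add]
  map_smul' r w := by ext k; simp [cip_eq_dotProduct, smul_dotProduct]; ring

lemma alphaMap_sub_alphaMap (x y : Fin n → ℂ) :
    alphaMap f x - alphaMap f y = alphaPolar f (x + y) (x - y) := by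
  ext k
  simp only [alphaMap, alphaPolar, LinearMap.coe_mk, AddHom.coe_mk, Pi.sub_apply,
    cip_eq_dotProduct, add_dotProduct, sub_dotProduct, Complex.normSq_apply]
  simp [Complex.mul_re]
  ring

lemma alphaMap_eq_alphaMap_iff_s1 (x y : Fin n → ℂ) :
    alphaMap f x = alphaMap f y ↔ x - y ∈ LinearMap.ker (alphaPolar f (x + y)) := by
  rw [LinearMap.mem_ker, ← alphaMap_sub_alphaMap, sub_eq_zero]

lemma I_smul_mem_ker_alphaPolar (u : Fin n → ℂ) :
    Complex.I • u ∈ LinearMap.ker (alphaPolar f u) := by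
  rw [LinearMap.mem_ker]
  ext k
  simp [alphaPolar, cip_eq_dotProduct, smul_dotProduct, Complex.mul_re]
  ring

lemma injUpToPhase_iff_ker_alphaPolar_le :
    InjUpToPhase f ↔
      ∀ u : Fin n → ℂ, u ≠ 0 → LinearMap.ker (alphaPolar f u) ≤ ℝ ∙ (Complex.I • u) := by
  simp only [InjUpToPhase, exists_norm_eq_one_smul_iff, alphaMap_eq_alphaMap_iff_s1]
  constructor
  · intro h u hu w hw
    have key := h ((2 : ℂ)⁻¹ • (u + w)) ((2 : ℂ)⁻¹ • (u - w))
    rw [show (2 : ℂ)⁻¹ • (u + w) + (2 : ℂ)⁻¹ • (u - w) = u by module,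
      show (2 : ℂ)⁻¹ • (u + w) - (2 : ℂ)⁻¹ • (u - w) = w by module] at key
    exact (key hw).resolve_left hu
  · intro h x y hxy
    by_cases hsum : x + y = 0
    · exact Or.inl hsum
    · exact Or.inr (h _ hsum hxy)

end Polarization

section Rank

variable {n m : ℕ} (f : Fin m → Fin n → ℂ)

-- Half the Jacobian of `α` in real coordinates, as `α(x)ₖ = ι(x)ᵀ Φₖ ι(x)`.
def jacobianMat (ξ : Fin n ⊕ Fin n → ℝ) : Matrix (Fin m) (Fin n ⊕ Fin n) ℝ :=
  Matrix.of fun k => PhiMat (f k) *ᵥ ξ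

lemma Rmat_eq_transpose_mul_self (ξ : Fin n ⊕ Fin n → ℝ) :
    Rmat f ξ = (jacobianMat f ξ)ᵀ * jacobianMat f ξ := by
  rw [transpose_mul_self_eq_sum_vecMulVec, Rmat]
  refine Finset.sum_congr rfl fun k _ => ?_
  rw [mul_vecMulVec, vecMulVec_mul, ← mulVec_transpose, PhiMat_transpose]
  rfl

lemma jacobianMat_iotaR_mulVec_iotaR (u w : Fin n → ℂ) :
    jacobianMat f (iotaR u) *ᵥ iotaR w = alphaPolar f u w := by
  ext k
  change PhiMat (f k) *ᵥ iotaR u ⬝ᵥ iotaR w = (cip u (f k) * conj (cip w (f k))).re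
  simp only [PhiMat_mulVec_dotProduct, dotProduct_comm (iotaR (f k)),
    dotProduct_comm (iotaR (Complex.I • f k)), iotaR_dotProduct_iotaR, cip_smul_right]
  simp [Complex.mul_re]

lemma rank_Rmat_iotaR (u : Fin n → ℂ) :
    (Rmat f (iotaR u)).rank = Module.finrank ℝ (LinearMap.range (alphaPolar f u)) := by
  have : (jacobianMat f (iotaR u)).mulVecLin ∘ₗ (iotaEquiv n).toLinearMap = alphaPolar f u :=
    LinearMap.ext (jacobianMat_iotaR_mulVec_iotaR f u)
  rw [Rmat_eq_transpose_mul_self, rank_transpose_mul_self, rank, ← this,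
    LinearMap.range_comp_of_range_eq_top _ (iotaEquiv n).range]

lemma rank_Rmat_iotaR_eq_iff {u : Fin n → ℂ} (hu : u ≠ 0) :
    (Rmat f (iotaR u)).rank = 2 * n - 1 ↔
      LinearMap.ker (alphaPolar f u) ≤ ℝ ∙ (Complex.I • u) := by
  have hIu : Complex.I • u ≠ 0 := smul_ne_zero Complex.I_ne_zero hu
  have hmem := I_smul_mem_ker_alphaPolar f u
  have hn : n ≠ 0 := by rintro rfl; exact hu (Subsingleton.elim _ _)
  have hrk := (alphaPolar f u).finrank_range_add_finrank_ker
  rw [finrank_real_pi_complex, ← rank_Rmat_iotaR] at hrk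
  constructor
  · intro h
    exact (eq_span_singleton_of_mem_of_finrank_eq_one (by omega) hmem hIu).le
  · intro h
    rw [le_antisymm h ((Submodule.span_singleton_le_iff_mem _ _).mpr hmem),
      finrank_span_singleton hIu] at hrk
    omega

end Rank

theorem stmt1_general (n m : ℕ) (f : Fin m → Fin n → ℂ) :
    InjUpToPhase f ↔
      ∀ ξ : Fin n ⊕ Fin n → ℝ, ξ ≠ 0 → (Rmat f ξ).rank = 2 * n - 1 := by
  refine (injUpToPhase_iff_ker_alphaPolar_le f).trans
    ((iotaEquiv n).toEquiv.forall_congr fun u => ?_)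
  exact (imp_congr_right fun hu => (rank_Rmat_iotaR_eq_iff f hu).symm).trans
    (imp_congr_left (iotaEquiv n).map_ne_zero_iff.symm)

/-- `α` is injective up to a global phase iff for every nonzero
`ξ ∈ ℝ²ⁿ` the matrix `R(ξ)` has rank exactly `2n − 1`. -/
theorem stmt1 (n m : ℕ) (f : Fin m → Fin n → ℂ)
    (hspan : Submodule.span ℂ (Set.range f) = ⊤) :
    InjUpToPhase f ↔
      ∀ ξ : Fin n ⊕ Fin n → ℝ, ξ ≠ 0 → (Rmat f ξ).rank = 2 * n - 1 :=
  stmt1_general n m f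
end
end

section
/- The following are equivalent: (i) for every nonzero ξ ∈ ℝ^{2n}, rank R(ξ) = 2n − 1; (ii) there exists a₀ > 0 such that for every ξ ∈ ℝ^{2n}, R(ξ) ⪰ a₀·( ‖ξ‖² I − Jξξᵀ Jᵀ ) in the sense of real quadratic forms (the right-hand side equals a₀‖ξ‖² times the orthogonal projection onto the orthogonal complement of Jξ when ξ ≠ 0). -/
/-!
`R(ξ) = ∑ₖ (Φₖξ)(Φₖξ)ᵀ` is positive semidefinite, and `Jξ` lies in its kernel because
`Φₖξ ⊥ Jξ`. Condition (ii) reads `vᵀR(ξ)v ≥ a₀ (‖ξ‖²‖v‖² - ⟨Jξ, v⟩²)` for all `ξ, v`.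

(ii) ⇒ (i): for `v` in the kernel this forces equality in Cauchy–Schwarz for `Jξ` and `v`,
so the kernel is the line `ℝ Jξ`.

(i) ⇒ (ii): the kernel being `ℝ Jξ`, the form `vᵀR(ξ)v` is positive on the compact set of
pairs of unit vectors `(ξ, v)` with `v ⊥ Jξ`, hence at least some `a₀ > 0` there. Both sides
are homogeneous of degree two in `ξ` and in `v`, and replacing `v` by its component `v'`
orthogonal to `Jξ` leaves `vᵀR(ξ)v` unchanged and turns the right side into `a₀‖ξ‖²‖v'‖²`.
-/

open scoped BigOperators ComplexConjugate
open Matrix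

noncomputable section

section DotProduct

variable {ι : Type*} [Fintype ι]

lemma dotProduct_self_smul_sub_smul (u v : ι → ℝ) :
    ((u ⬝ᵥ u) • v - (u ⬝ᵥ v) • u) ⬝ᵥ ((u ⬝ᵥ u) • v - (u ⬝ᵥ v) • u)
      = (u ⬝ᵥ u) * ((u ⬝ᵥ u) * (v ⬝ᵥ v) - (u ⬝ᵥ v) ^ 2) := by
  simp only [sub_dotProduct, dotProduct_sub, smul_dotProduct, dotProduct_smul, smul_eq_mul,
    dotProduct_comm v u]
  ring

lemma mem_span_singleton_of_mul_le_sq {u v : ι → ℝ} (hu : u ≠ 0)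
    (h : (u ⬝ᵥ u) * (v ⬝ᵥ v) ≤ (u ⬝ᵥ v) ^ 2) : v ∈ ℝ ∙ u := by
  have hs : 0 < u ⬝ᵥ u := dotProduct_self_star_pos_iff.mpr hu
  have hw : (u ⬝ᵥ u) • v - (u ⬝ᵥ v) • u = 0 := by
    refine dotProduct_self_eq_zero.mp (le_antisymm ?_ (dotProduct_star_self_nonneg _))
    rw [dotProduct_self_smul_sub_smul]
    exact mul_nonpos_of_nonneg_of_nonpos hs.le (sub_nonpos.mpr h)
  refine Submodule.mem_span_singleton.mpr ⟨(u ⬝ᵥ u)⁻¹ * (u ⬝ᵥ v), ?_⟩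
  rw [mul_smul, ← sub_eq_zero.mp hw, inv_smul_smul₀ hs.ne']

lemma isCompact_setOf_dotProduct_self_eq_one : IsCompact {v : ι → ℝ | v ⬝ᵥ v = 1} := by
  have hsphere : ∀ x : EuclideanSpace ℝ ι, ‖x‖ = 1 ↔ x.ofLp ⬝ᵥ x.ofLp = 1 := fun x => by
    rw [← pow_eq_one_iff_of_nonneg (norm_nonneg x) two_ne_zero, ← real_inner_self_eq_norm_sq,
      EuclideanSpace.inner_eq_star_dotProduct, star_trivial]
  convert (isCompact_sphere (0 : EuclideanSpace ℝ ι) 1).image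
    (EuclideanSpace.equiv ι ℝ).continuous
  ext v
  simp only [Set.mem_image, mem_sphere_iff_norm, sub_zero, hsphere]
  exact ⟨fun hv => ⟨WithLp.toLp 2 v, hv, rfl⟩, by rintro ⟨x, hx, rfl⟩; exact hx⟩

end DotProduct

theorem Matrix.rank_eq_card_sub_one_iff {K ι : Type*} [Field K] [Fintype ι]
    {A : Matrix ι ι K} {u : ι → K} (hu : u ≠ 0) (hAu : A *ᵥ u = 0) :
    A.rank = Fintype.card ι - 1 ↔ LinearMap.ker A.mulVecLin = K ∙ u := by
  have hker : K ∙ u ≤ LinearMap.ker A.mulVecLin := by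
    rwa [Submodule.span_singleton_le_iff_mem, LinearMap.mem_ker, mulVecLin_apply]
  have hrn := A.mulVecLin.finrank_range_add_finrank_ker
  rw [Module.finrank_fintype_fun_eq_card, ← rank] at hrn
  have h1 := finrank_span_singleton (K := K) hu
  have hcard : 0 < Fintype.card ι :=
    Fintype.card_pos_iff.mpr (Function.ne_iff.mp hu).nonempty
  constructor
  · intro hA
    exact (Submodule.eq_of_le_of_finrank_eq hker (by omega)).symm
  · intro hA
    rw [hA] at hrn
    omega

lemma Matrix.mul_vecMulVec_self_mul_transpose {α ι : Type*} [CommSemiring α] [Fintype ι]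
    (M : Matrix ι ι α) (x : ι → α) : M * vecMulVec x x * Mᵀ = vecMulVec (M *ᵥ x) (M *ᵥ x) := by
  rw [mul_vecMulVec, vecMulVec_mul, vecMul_transpose]

section Jmat

variable {n : ℕ}

lemma Jmat_mulVec (w : Fin n ⊕ Fin n → ℝ) :
    Jmat n *ᵥ w = Sum.elim (fun j => -w (Sum.inr j)) (fun j => w (Sum.inl j)) := by
  ext (j | j) <;> simp [Jmat, mulVec, dotProduct, Fintype.sum_sum_type, fromBlocks, one_apply]

lemma Jmat_mulVec_dotProduct_Jmat_mulVec (w u : Fin n ⊕ Fin n → ℝ) :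
    (Jmat n *ᵥ w) ⬝ᵥ (Jmat n *ᵥ u) = w ⬝ᵥ u := by
  simp only [Jmat_mulVec, dotProduct, Fintype.sum_sum_type, Sum.elim_inl, Sum.elim_inr,
    neg_mul_neg]
  exact add_comm _ _

lemma Jmat_mulVec_dotProduct (w u : Fin n ⊕ Fin n → ℝ) :
    (Jmat n *ᵥ w) ⬝ᵥ u = -(w ⬝ᵥ (Jmat n *ᵥ u)) := by
  simp only [Jmat_mulVec, dotProduct, Fintype.sum_sum_type, Sum.elim_inl, Sum.elim_inr,
    neg_mul, mul_neg, Finset.sum_neg_distrib]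
  ring

lemma Jmat_mulVec_ne_zero {w : Fin n ⊕ Fin n → ℝ} (hw : w ≠ 0) : Jmat n *ᵥ w ≠ 0 := by
  rw [← dotProduct_self_star_pos_iff, star_trivial, Jmat_mulVec_dotProduct_Jmat_mulVec]
  simpa using dotProduct_self_star_pos_iff.mpr hw

end Jmat

section PhiMat

variable {n : ℕ} (fk : Fin n → ℂ)

lemma PhiMat_eq_s2 : PhiMat fk = vecMulVec (iotaR fk) (iotaR fk)
    + vecMulVec (Jmat n *ᵥ iotaR fk) (Jmat n *ᵥ iotaR fk) := by
  rw [PhiMat, mul_vecMulVec_self_mul_transpose]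

lemma PhiMat_transpose_s2 : (PhiMat fk)ᵀ = PhiMat fk := by
  rw [PhiMat_eq_s2, transpose_add, transpose_vecMulVec, transpose_vecMulVec]

lemma PhiMat_mulVec_dotProduct_Jmat_mulVec (ξ : Fin n ⊕ Fin n → ℝ) :
    (PhiMat fk *ᵥ ξ) ⬝ᵥ (Jmat n *ᵥ ξ) = 0 := by
  simp only [PhiMat_eq_s2, add_mulVec, vecMulVec_mulVec, op_smul_eq_smul, add_dotProduct,
    smul_dotProduct, smul_eq_mul, Jmat_mulVec_dotProduct_Jmat_mulVec,
    Jmat_mulVec_dotProduct (iotaR fk) ξ]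
  ring

end PhiMat

section Rmat

variable {n m : ℕ} (f : Fin m → Fin n → ℂ)

lemma Rmat_eq_sum_vecMulVec (ξ : Fin n ⊕ Fin n → ℝ) :
    Rmat f ξ = ∑ k, vecMulVec (PhiMat (f k) *ᵥ ξ) (PhiMat (f k) *ᵥ ξ) := by
  refine Finset.sum_congr rfl fun k _ => ?_
  simpa only [PhiMat_transpose_s2] using mul_vecMulVec_self_mul_transpose (PhiMat (f k)) ξ

lemma posSemidef_Rmat (ξ : Fin n ⊕ Fin n → ℝ) : (Rmat f ξ).PosSemidef := by
  rw [Rmat_eq_sum_vecMulVec]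
  exact posSemidef_sum _ fun k _ => posSemidef_vecMulVec_self_star _

lemma Rmat_mulVec (ξ v : Fin n ⊕ Fin n → ℝ) :
    Rmat f ξ *ᵥ v = ∑ k, ((PhiMat (f k) *ᵥ ξ) ⬝ᵥ v) • (PhiMat (f k) *ᵥ ξ) := by
  simp only [Rmat_eq_sum_vecMulVec, sum_mulVec, vecMulVec_mulVec, op_smul_eq_smul]

lemma dotProduct_Rmat_mulVec (ξ v : Fin n ⊕ Fin n → ℝ) :
    v ⬝ᵥ (Rmat f ξ *ᵥ v) = ∑ k, ((PhiMat (f k) *ᵥ ξ) ⬝ᵥ v) ^ 2 := by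
  rw [dotProduct_comm, Rmat_mulVec, sum_dotProduct]
  simp only [smul_dotProduct, smul_eq_mul, sq]

lemma Rmat_mulVec_Jmat_mulVec (ξ : Fin n ⊕ Fin n → ℝ) : Rmat f ξ *ᵥ (Jmat n *ᵥ ξ) = 0 := by
  simp only [Rmat_mulVec, PhiMat_mulVec_dotProduct_Jmat_mulVec, zero_smul, Finset.sum_const_zero]

lemma continuous_dotProduct_Rmat_mulVec :
    Continuous fun p : (Fin n ⊕ Fin n → ℝ) × (Fin n ⊕ Fin n → ℝ) =>
      p.2 ⬝ᵥ (Rmat f p.1 *ᵥ p.2) := by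
  simp only [dotProduct_Rmat_mulVec]
  fun_prop

end Rmat

section Equivalence

variable {n m : ℕ} (f : Fin m → Fin n → ℂ)

lemma posSemidef_Rmat_sub_smul_iff (a : ℝ) (ξ : Fin n ⊕ Fin n → ℝ) :
    (Rmat f ξ - a • ((∑ i, ξ i ^ 2) • (1 : Matrix (Fin n ⊕ Fin n) (Fin n ⊕ Fin n) ℝ)
        - Jmat n * vecMulVec ξ ξ * (Jmat n)ᵀ)).PosSemidef ↔
      ∀ v, a * ((ξ ⬝ᵥ ξ) * (v ⬝ᵥ v) - ((Jmat n *ᵥ ξ) ⬝ᵥ v) ^ 2) ≤ v ⬝ᵥ (Rmat f ξ *ᵥ v) := by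
  have hξξ : ∑ i, ξ i ^ 2 = ξ ⬝ᵥ ξ := by simp only [dotProduct, sq]
  have hherm :
      (Rmat f ξ - a • ((ξ ⬝ᵥ ξ) • 1 - vecMulVec (Jmat n *ᵥ ξ) (Jmat n *ᵥ ξ))).IsHermitian :=
    (posSemidef_Rmat f ξ).isHermitian.sub <| IsHermitian.smul
      ((isHermitian_one.smul (.all _)).sub (posSemidef_vecMulVec_self_star _).isHermitian)
      (.all a)
  rw [hξξ, mul_vecMulVec_self_mul_transpose, posSemidef_iff_dotProduct_mulVec,
    and_iff_right hherm]
  refine forall_congr' fun v => ?_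
  rw [star_trivial, sub_mulVec, dotProduct_sub, sub_nonneg]
  simp only [smul_mulVec, sub_mulVec, one_mulVec, vecMulVec_mulVec, op_smul_eq_smul,
    dotProduct_smul, dotProduct_sub, smul_eq_mul, dotProduct_comm v (Jmat n *ᵥ ξ), sq]

lemma ker_Rmat_eq_span_of_forall_mul_le {a : ℝ} (ha : 0 < a) {ξ : Fin n ⊕ Fin n → ℝ}
    (hR : ∀ v, a * ((ξ ⬝ᵥ ξ) * (v ⬝ᵥ v) - ((Jmat n *ᵥ ξ) ⬝ᵥ v) ^ 2) ≤ v ⬝ᵥ (Rmat f ξ *ᵥ v))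
    (hξ : ξ ≠ 0) :
    LinearMap.ker (Rmat f ξ).mulVecLin = ℝ ∙ (Jmat n *ᵥ ξ) := by
  refine le_antisymm (fun v hv => ?_) ?_
  · rw [LinearMap.mem_ker, mulVecLin_apply] at hv
    have := hR v
    rw [hv, dotProduct_zero] at this
    refine mem_span_singleton_of_mul_le_sq (Jmat_mulVec_ne_zero hξ) ?_
    rw [Jmat_mulVec_dotProduct_Jmat_mulVec]
    nlinarith
  · rw [Submodule.span_singleton_le_iff_mem, LinearMap.mem_ker, mulVecLin_apply]
    exact Rmat_mulVec_Jmat_mulVec f ξ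

lemma rank_Rmat_of_forall_mul_le {a : ℝ} (ha : 0 < a) {ξ : Fin n ⊕ Fin n → ℝ}
    (hR : ∀ v, a * ((ξ ⬝ᵥ ξ) * (v ⬝ᵥ v) - ((Jmat n *ᵥ ξ) ⬝ᵥ v) ^ 2) ≤ v ⬝ᵥ (Rmat f ξ *ᵥ v))
    (hξ : ξ ≠ 0) : (Rmat f ξ).rank = 2 * n - 1 := by
  have hrank := (rank_eq_card_sub_one_iff (Jmat_mulVec_ne_zero hξ)
    (Rmat_mulVec_Jmat_mulVec f ξ)).mpr (ker_Rmat_eq_span_of_forall_mul_le f ha hR hξ)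
  rwa [Fintype.card_sum, Fintype.card_fin, ← two_mul] at hrank

lemma dotProduct_Rmat_mulVec_pos {ξ v : Fin n ⊕ Fin n → ℝ} (hrank : (Rmat f ξ).rank = 2 * n - 1)
    (hξ : ξ ≠ 0) (hv : v ≠ 0) (hperp : (Jmat n *ᵥ ξ) ⬝ᵥ v = 0) :
    0 < v ⬝ᵥ (Rmat f ξ *ᵥ v) := by
  have hJξ := Jmat_mulVec_ne_zero hξ
  refine lt_of_le_of_ne (by simpa using (posSemidef_Rmat f ξ).dotProduct_mulVec_nonneg v)
    fun hzero => hv ?_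
  have hker : v ∈ LinearMap.ker (Rmat f ξ).mulVecLin := by
    rw [LinearMap.mem_ker, mulVecLin_apply, ← (posSemidef_Rmat f ξ).dotProduct_mulVec_zero_iff,
      star_trivial]
    exact hzero.symm
  rw [(rank_eq_card_sub_one_iff hJξ (Rmat_mulVec_Jmat_mulVec f ξ)).mp
    (by rw [hrank, Fintype.card_sum, Fintype.card_fin, two_mul])] at hker
  obtain ⟨c, rfl⟩ := Submodule.mem_span_singleton.mp hker
  rw [dotProduct_smul, smul_eq_mul, mul_eq_zero] at hperp
  rcases hperp with hc | hJJ
  · rw [hc, zero_smul]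
  · exact absurd (dotProduct_self_eq_zero.mp hJJ) hJξ

lemma exists_pos_le_dotProduct_Rmat_mulVec
    (hrank : ∀ ξ : Fin n ⊕ Fin n → ℝ, ξ ≠ 0 → (Rmat f ξ).rank = 2 * n - 1) :
    ∃ a > 0, ∀ ξ v : Fin n ⊕ Fin n → ℝ, ξ ⬝ᵥ ξ = 1 → v ⬝ᵥ v = 1 → (Jmat n *ᵥ ξ) ⬝ᵥ v = 0 →
      a ≤ v ⬝ᵥ (Rmat f ξ *ᵥ v) := by
  have hK : IsCompact ({v : Fin n ⊕ Fin n → ℝ | v ⬝ᵥ v = 1} ×ˢ {v | v ⬝ᵥ v = 1}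
      ∩ {p | (Jmat n *ᵥ p.1) ⬝ᵥ p.2 = 0}) :=
    (isCompact_setOf_dotProduct_self_eq_one.prod
      isCompact_setOf_dotProduct_self_eq_one).inter_right
        (isClosed_eq (by fun_prop) continuous_const)
  have hne : ∀ v : Fin n ⊕ Fin n → ℝ, v ⬝ᵥ v = 1 → v ≠ 0 := by
    rintro v hv rfl
    simp at hv
  obtain ⟨a, ha, hle⟩ := hK.exists_forall_le' (continuous_dotProduct_Rmat_mulVec f).continuousOn
    fun p ⟨⟨hξ, hv⟩, hperp⟩ =>
      dotProduct_Rmat_mulVec_pos f (hrank _ (hne _ hξ)) (hne _ hξ) (hne _ hv) hperp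
  exact ⟨a, ha, fun ξ v hξ hv hperp => hle (ξ, v) ⟨⟨hξ, hv⟩, hperp⟩⟩

lemma dotProduct_Rmat_smul_mulVec_smul (c d : ℝ) (ξ w : Fin n ⊕ Fin n → ℝ) :
    (d • w) ⬝ᵥ (Rmat f (c • ξ) *ᵥ (d • w)) = c ^ 2 * d ^ 2 * (w ⬝ᵥ (Rmat f ξ *ᵥ w)) := by
  simp only [dotProduct_Rmat_mulVec, mulVec_smul, smul_dotProduct, dotProduct_smul, smul_eq_mul,
    Finset.mul_sum]
  exact Finset.sum_congr rfl fun k _ => by ring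

lemma mul_le_dotProduct_Rmat_mulVec_of_perp {a : ℝ}
    (ha : ∀ ξ v : Fin n ⊕ Fin n → ℝ, ξ ⬝ᵥ ξ = 1 → v ⬝ᵥ v = 1 → (Jmat n *ᵥ ξ) ⬝ᵥ v = 0 →
      a ≤ v ⬝ᵥ (Rmat f ξ *ᵥ v))
    {ξ w : Fin n ⊕ Fin n → ℝ} (hξ : ξ ≠ 0) (hperp : (Jmat n *ᵥ ξ) ⬝ᵥ w = 0) :
    a * ((ξ ⬝ᵥ ξ) * (w ⬝ᵥ w)) ≤ w ⬝ᵥ (Rmat f ξ *ᵥ w) := by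
  rcases eq_or_ne w 0 with rfl | hw
  · simp
  have normalize : ∀ x : Fin n ⊕ Fin n → ℝ, x ≠ 0 → ∃ c : ℝ, c ^ 2 * (x ⬝ᵥ x) = 1 := by
    intro x hx
    have hx : 0 < x ⬝ᵥ x := by simpa using dotProduct_self_star_pos_iff.mpr hx
    exact ⟨(√(x ⬝ᵥ x))⁻¹, by rw [inv_pow, Real.sq_sqrt hx.le, inv_mul_cancel₀ hx.ne']⟩
  obtain ⟨c, hc⟩ := normalize ξ hξ
  obtain ⟨d, hd⟩ := normalize w hw
  have hunit := ha (c • ξ) (d • w)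
    (by simpa only [smul_dotProduct, dotProduct_smul, smul_eq_mul, ← mul_assoc, ← sq] using hc)
    (by simpa only [smul_dotProduct, dotProduct_smul, smul_eq_mul, ← mul_assoc, ← sq] using hd)
    (by simp only [mulVec_smul, smul_dotProduct, dotProduct_smul, hperp, smul_zero])
  rw [dotProduct_Rmat_smul_mulVec_smul] at hunit
  have hsr : 0 ≤ (ξ ⬝ᵥ ξ) * (w ⬝ᵥ w) :=
    mul_nonneg (dotProduct_star_self_nonneg ξ) (dotProduct_star_self_nonneg w)
  calc a * ((ξ ⬝ᵥ ξ) * (w ⬝ᵥ w))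
      ≤ c ^ 2 * d ^ 2 * (w ⬝ᵥ (Rmat f ξ *ᵥ w)) * ((ξ ⬝ᵥ ξ) * (w ⬝ᵥ w)) :=
        mul_le_mul_of_nonneg_right hunit hsr
    _ = w ⬝ᵥ (Rmat f ξ *ᵥ w) := by
        linear_combination (w ⬝ᵥ (Rmat f ξ *ᵥ w)) * ((d ^ 2 * (w ⬝ᵥ w)) * hc + hd)

lemma mul_le_dotProduct_Rmat_mulVec {a : ℝ}
    (ha : ∀ ξ v : Fin n ⊕ Fin n → ℝ, ξ ⬝ᵥ ξ = 1 → v ⬝ᵥ v = 1 → (Jmat n *ᵥ ξ) ⬝ᵥ v = 0 →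
      a ≤ v ⬝ᵥ (Rmat f ξ *ᵥ v))
    (ξ v : Fin n ⊕ Fin n → ℝ) :
    a * ((ξ ⬝ᵥ ξ) * (v ⬝ᵥ v) - ((Jmat n *ᵥ ξ) ⬝ᵥ v) ^ 2) ≤ v ⬝ᵥ (Rmat f ξ *ᵥ v) := by
  rcases eq_or_ne ξ 0 with rfl | hξ
  · simpa using (posSemidef_Rmat f 0).dotProduct_mulVec_nonneg v
  set u := Jmat n *ᵥ ξ
  have huu : u ⬝ᵥ u = ξ ⬝ᵥ ξ := Jmat_mulVec_dotProduct_Jmat_mulVec ξ ξ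
  have hs : 0 < ξ ⬝ᵥ ξ := by simpa using dotProduct_self_star_pos_iff.mpr hξ
  -- `u ⬝ᵥ u` times the component of `v` orthogonal to `u`
  set w := (u ⬝ᵥ u) • v - (u ⬝ᵥ v) • u
  have hperp : u ⬝ᵥ w = 0 := by
    simp only [w, dotProduct_sub, dotProduct_smul, smul_eq_mul]
    ring
  have hRw : w ⬝ᵥ (Rmat f ξ *ᵥ w) = (ξ ⬝ᵥ ξ) ^ 2 * (v ⬝ᵥ (Rmat f ξ *ᵥ v)) := by
    simp only [dotProduct_Rmat_mulVec, Finset.mul_sum, w, dotProduct_sub, dotProduct_smul,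
      PhiMat_mulVec_dotProduct_Jmat_mulVec, u, huu, smul_eq_mul, mul_zero, sub_zero]
    exact Finset.sum_congr rfl fun k _ => by ring
  have hww : w ⬝ᵥ w = (ξ ⬝ᵥ ξ) * ((ξ ⬝ᵥ ξ) * (v ⬝ᵥ v) - (u ⬝ᵥ v) ^ 2) := by
    rw [← huu]
    exact dotProduct_self_smul_sub_smul u v
  have key := mul_le_dotProduct_Rmat_mulVec_of_perp f ha hξ hperp
  rw [hww, hRw] at key
  have hs2 : 0 < (ξ ⬝ᵥ ξ) ^ 2 := by positivity
  refine le_of_mul_le_mul_left ?_ hs2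
  linarith

end Equivalence

theorem stmt2_general (n m : ℕ) (f : Fin m → Fin n → ℂ) :
    (∀ ξ : Fin n ⊕ Fin n → ℝ, ξ ≠ 0 → (Rmat f ξ).rank = 2 * n - 1) ↔
      ∃ a₀ : ℝ, 0 < a₀ ∧ ∀ ξ : Fin n ⊕ Fin n → ℝ,
        (Rmat f ξ - a₀ • ((∑ i, ξ i ^ 2) • (1 : Matrix (Fin n ⊕ Fin n) (Fin n ⊕ Fin n) ℝ)
            - Jmat n * Matrix.vecMulVec ξ ξ * (Jmat n)ᵀ)).PosSemidef := by
  simp only [posSemidef_Rmat_sub_smul_iff]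
  constructor
  · intro hrank
    obtain ⟨a, ha, hunit⟩ := exists_pos_le_dotProduct_Rmat_mulVec f hrank
    exact ⟨a, ha, mul_le_dotProduct_Rmat_mulVec f hunit⟩
  · rintro ⟨a, ha, hR⟩ ξ hξ
    exact rank_Rmat_of_forall_mul_le f ha (hR ξ) hξ

/-- For a frame `F` of `ℂⁿ`, the following are equivalent:
(i) `rank R(ξ) = 2n − 1` for every nonzero `ξ ∈ ℝ²ⁿ`;
(ii) there is `a₀ > 0` with `R(ξ) ⪰ a₀ (‖ξ‖² I − Jξξᵀ Jᵀ)` for every `ξ ∈ ℝ²ⁿ`. -/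
theorem stmt2 (n m : ℕ) (f : Fin m → Fin n → ℂ)
    (hspan : Submodule.span ℂ (Set.range f) = ⊤) :
    (∀ ξ : Fin n ⊕ Fin n → ℝ, ξ ≠ 0 → (Rmat f ξ).rank = 2 * n - 1) ↔
      ∃ a₀ : ℝ, 0 < a₀ ∧ ∀ ξ : Fin n ⊕ Fin n → ℝ,
        (Rmat f ξ - a₀ • ((∑ i, ξ i ^ 2) • (1 : Matrix (Fin n ⊕ Fin n) (Fin n ⊕ Fin n) ℝ)
            - Jmat n * Matrix.vecMulVec ξ ξ * (Jmat n)ᵀ)).PosSemidef :=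
  stmt2_general n m f
end
end

section
/- The following are equivalent: (i) the restriction of α to ℝⁿ is injective up to a sign, i.e. for u, v ∈ ℝⁿ, α(u) = α(v) implies v = u or v = −u; (ii) there exists a constant a₀ > 0 such that for all u, v ∈ ℝⁿ, Σ_{k=1}^m ( vᵀ Φ'_k u )² ≥ a₀ ‖u‖²‖v‖². -/
/-!
For real `a`, `b` one has `α(a)ₖ - α(b)ₖ = (a + b)ᵀ Φ'ₖ (a - b)`, so with `u = a - b`, `v = a + b`
injectivity up to sign says exactly that `vᵀ Φ'ₖ u = 0` for all `k` forces `u = 0` or `v = 0`,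
i.e. that `Q(u, v) = ∑ₖ (vᵀ Φ'ₖ u)²` vanishes only when `u = 0` or `v = 0`. Since `Q` is continuous
and homogeneous of degree two in each argument, this holds iff `Q` is bounded below by a positive
constant on the compact product of unit spheres.
-/

open scoped BigOperators ComplexConjugate
open Matrix

noncomputable section

/-- The real matrix `Φ'ₖ = gₖgₖᵀ + hₖhₖᵀ` where `fₖ = gₖ + i hₖ`. -/
def PhiReal {n : ℕ} (fk : Fin n → ℂ) : Matrix (Fin n) (Fin n) ℝ :=
  Matrix.vecMulVec (fun j => (fk j).re) (fun j => (fk j).re)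
    + Matrix.vecMulVec (fun j => (fk j).im) (fun j => (fk j).im)

/-- Embedding of `ℝⁿ` into `ℂⁿ`. -/
def toC {n : ℕ} (u : Fin n → ℝ) : Fin n → ℂ := fun j => (u j : ℂ)

section BoundedBelow

variable {E F : Type*} [NormedAddCommGroup E] [NormedAddCommGroup F]

theorem eq_zero_or_eq_zero_of_mul_sq_norm_mul_sq_norm_le {Q : E → F → ℝ} {a : ℝ} (ha : 0 < a)
    (hbound : ∀ u v, a * (‖u‖ ^ 2 * ‖v‖ ^ 2) ≤ Q u v) {u : E} {v : F} (h : Q u v = 0) :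
    u = 0 ∨ v = 0 := by
  by_contra! huv
  have hu := norm_pos_iff.2 huv.1
  have hv := norm_pos_iff.2 huv.2
  have : 0 < a * (‖u‖ ^ 2 * ‖v‖ ^ 2) := by positivity
  linarith [hbound u v]

variable [NormedSpace ℝ E] [ProperSpace E] [NormedSpace ℝ F] [ProperSpace F]

theorem exists_pos_mul_sq_norm_mul_sq_norm_le {Q : E → F → ℝ}
    (hQ : Continuous (Function.uncurry Q)) (hQ_nonneg : ∀ u v, 0 ≤ Q u v)
    (hQ_smul : ∀ (c d : ℝ) u v, Q (c • u) (d • v) = c ^ 2 * d ^ 2 * Q u v)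
    (hQ_eq_zero : ∀ u v, Q u v = 0 → u = 0 ∨ v = 0) :
    ∃ a > 0, ∀ u v, a * (‖u‖ ^ 2 * ‖v‖ ^ 2) ≤ Q u v := by
  have hK : IsCompact (Metric.sphere (0 : E) 1 ×ˢ Metric.sphere (0 : F) 1) :=
    (isCompact_sphere 0 1).prod (isCompact_sphere 0 1)
  have hpos : ∀ p ∈ Metric.sphere (0 : E) 1 ×ˢ Metric.sphere (0 : F) 1,
      0 < Function.uncurry Q p := by
    rintro ⟨u, v⟩ ⟨hu, hv⟩
    refine (hQ_nonneg u v).lt_of_ne' fun h => ?_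
    rcases hQ_eq_zero u v h with rfl | rfl <;> simp_all
  obtain ⟨a, ha, hmin⟩ := hK.exists_forall_le' hQ.continuousOn hpos
  refine ⟨a, ha, fun u v => ?_⟩
  rcases eq_or_ne u 0 with rfl | hu
  · simpa using hQ_nonneg 0 v
  rcases eq_or_ne v 0 with rfl | hv
  · simpa using hQ_nonneg u 0
  have hunit := hmin (‖u‖⁻¹ • u, ‖v‖⁻¹ • v)
    ⟨by simp [norm_smul, hu], by simp [norm_smul, hv]⟩
  rw [Function.uncurry_apply_pair, hQ_smul] at hunit
  have hu' : 0 < ‖u‖ := norm_pos_iff.2 hu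
  have hv' : 0 < ‖v‖ := norm_pos_iff.2 hv
  calc a * (‖u‖ ^ 2 * ‖v‖ ^ 2)
      ≤ ‖u‖⁻¹ ^ 2 * ‖v‖⁻¹ ^ 2 * Q u v * (‖u‖ ^ 2 * ‖v‖ ^ 2) := by gcongr
    _ = Q u v := by field_simp

end BoundedBelow

theorem dotProduct_PhiReal_mulVec {n : ℕ} (fk : Fin n → ℂ) (u v : Fin n → ℝ) :
    v ⬝ᵥ PhiReal fk *ᵥ u =
      (v ⬝ᵥ fun j => (fk j).re) * ((fun j => (fk j).re) ⬝ᵥ u)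
        + (v ⬝ᵥ fun j => (fk j).im) * ((fun j => (fk j).im) ⬝ᵥ u) := by
  simp [PhiReal, add_mulVec, vecMulVec_mulVec, dotProduct_add, mul_comm]

theorem normSq_cip_toC {n : ℕ} (fk : Fin n → ℂ) (u : Fin n → ℝ) :
    Complex.normSq (cip (toC u) fk) = u ⬝ᵥ PhiReal fk *ᵥ u := by
  have hre : (cip (toC u) fk).re = u ⬝ᵥ fun j => (fk j).re := by
    simp [cip, toC, dotProduct, Complex.re_sum, Complex.mul_re]
  have him : (cip (toC u) fk).im = -(u ⬝ᵥ fun j => (fk j).im) := by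
    simp [cip, toC, dotProduct, Complex.im_sum, Complex.mul_im]
  rw [Complex.normSq_apply, hre, him, dotProduct_PhiReal_mulVec, dotProduct_comm _ u,
    dotProduct_comm _ u]
  ring

theorem alphaMap_toC_sub_alphaMap_toC {n m : ℕ} (f : Fin m → Fin n → ℂ) (a b : Fin n → ℝ)
    (k : Fin m) :
    alphaMap f (toC a) k - alphaMap f (toC b) k = (a + b) ⬝ᵥ PhiReal (f k) *ᵥ (a - b) := by
  simp only [alphaMap, normSq_cip_toC, dotProduct_PhiReal_mulVec, add_dotProduct,
    dotProduct_sub, dotProduct_comm _ a, dotProduct_comm _ b]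
  ring

theorem alphaMap_toC_eq_iff {n m : ℕ} (f : Fin m → Fin n → ℂ) (a b : Fin n → ℝ) :
    alphaMap f (toC a) = alphaMap f (toC b) ↔
      ∀ k, (a + b) ⬝ᵥ PhiReal (f k) *ᵥ (a - b) = 0 := by
  rw [funext_iff]
  exact forall_congr' fun k => by rw [← sub_eq_zero, alphaMap_toC_sub_alphaMap_toC]

theorem alphaMap_toC_injective_up_to_sign_iff {n m : ℕ} (f : Fin m → Fin n → ℂ) :
    (∀ a b : Fin n → ℝ, alphaMap f (toC a) = alphaMap f (toC b) → b = a ∨ b = -a) ↔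
      ∀ u v : Fin n → ℝ, (∀ k, v ⬝ᵥ PhiReal (f k) *ᵥ u = 0) → u = 0 ∨ v = 0 := by
  constructor
  · intro hinj u v huv
    obtain ⟨a, b, rfl, rfl⟩ : ∃ a b : Fin n → ℝ, a - b = u ∧ a + b = v :=
      ⟨(2 : ℝ)⁻¹ • (v + u), (2 : ℝ)⁻¹ • (v - u), by module, by module⟩
    rcases hinj a b ((alphaMap_toC_eq_iff f a b).2 huv) with rfl | rfl <;> simp
  · intro hdeg a b hab
    rcases hdeg (a - b) (a + b) ((alphaMap_toC_eq_iff f a b).1 hab) with h | h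
    · exact .inl (sub_eq_zero.1 h).symm
    · exact .inr (eq_neg_of_add_eq_zero_right h)

theorem stmt3_general (n m : ℕ) (f : Fin m → Fin n → ℂ) :
    (∀ u v : Fin n → ℝ, alphaMap f (toC u) = alphaMap f (toC v) → v = u ∨ v = -u) ↔
      ∃ a₀ : ℝ, 0 < a₀ ∧ ∀ u v : Fin n → ℝ,
        a₀ * ((∑ j, u j ^ 2) * (∑ j, v j ^ 2))
          ≤ ∑ k, (v ⬝ᵥ (PhiReal (f k)).mulVec u) ^ 2 := by
  let Q (x y : EuclideanSpace ℝ (Fin n)) : ℝ := ∑ k, (y.ofLp ⬝ᵥ PhiReal (f k) *ᵥ x.ofLp) ^ 2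
  have hQ_eq_zero (x y) : Q x y = 0 ↔ ∀ k, y.ofLp ⬝ᵥ PhiReal (f k) *ᵥ x.ofLp = 0 := by
    simp [Q, Finset.sum_eq_zero_iff_of_nonneg, sq_nonneg]
  have hQ_smul (c d : ℝ) (x y) : Q (c • x) (d • y) = c ^ 2 * d ^ 2 * Q x y := by
    simp only [Q, Finset.mul_sum, WithLp.ofLp_smul, mulVec_smul, dotProduct_smul, smul_dotProduct,
      smul_eq_mul]
    exact Finset.sum_congr rfl fun k _ => by ring
  have hnorm (u : Fin n → ℝ) : ‖WithLp.toLp 2 u‖ ^ 2 = ∑ j, u j ^ 2 := by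
    simp [EuclideanSpace.norm_sq_eq]
  rw [alphaMap_toC_injective_up_to_sign_iff]
  constructor
  · intro hdeg
    obtain ⟨a, ha, hbound⟩ := exists_pos_mul_sq_norm_mul_sq_norm_le (Q := Q) (by fun_prop)
      (fun _ _ => by positivity) hQ_smul
      (fun x y hxy => by simpa using hdeg x.ofLp y.ofLp ((hQ_eq_zero x y).1 hxy))
    exact ⟨a, ha, fun u v => by simpa [hnorm] using hbound (WithLp.toLp 2 u) (WithLp.toLp 2 v)⟩
  · rintro ⟨a, ha, hbound⟩ u v huv
    simpa using eq_zero_or_eq_zero_of_mul_sq_norm_mul_sq_norm_le ha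
      (fun x y => by simpa [hnorm] using hbound x.ofLp y.ofLp)
      ((hQ_eq_zero (WithLp.toLp 2 u) (WithLp.toLp 2 v)).2 huv)

/-- The restriction of `α` to `ℝⁿ` is injective up to a sign iff there is
`a₀ > 0` with `∑ₖ (vᵀ Φ'ₖ u)² ≥ a₀ ‖u‖²‖v‖²` for all `u, v ∈ ℝⁿ`. -/
theorem stmt3 (n m : ℕ) (f : Fin m → Fin n → ℂ)
    (hspan : Submodule.span ℂ (Set.range f) = ⊤) :
    (∀ u v : Fin n → ℝ, alphaMap f (toC u) = alphaMap f (toC v) → v = u ∨ v = -u) ↔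
      ∃ a₀ : ℝ, 0 < a₀ ∧ ∀ u v : Fin n → ℝ,
        a₀ * ((∑ j, u j ^ 2) * (∑ j, v j ^ 2))
          ≤ ∑ k, (v ⬝ᵥ (PhiReal (f k)).mulVec u) ^ 2 :=
  stmt3_general n m f
end
end

section
/- For nonnegative integers p, q, r, s: (i) if T is a Hermitian n×n matrix with at most p positive and at most q negative eigenvalues, and S is a Hermitian n×n matrix with at most r positive and at most s negative eigenvalues, then T + S has at most p+r positive and at most q+s negative eigenvalues; (ii) conversely, every Hermitian n×n matrix W with at most p+r positive and at most q+s negative eigenvalues can be written as W = T + S with T having at most p positive and at most q negative eigenvalues and S having at most r positive and at most s negative eigenvalues. That is, S^{p,q} + S^{r,s} = S^{p+r,q+s}. -/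
/-!
Part (i) is subadditivity of the number of positive eigenvalues. The Hermitian form of `T` is
nonpositive on the span `V` of the eigenvectors of `T` with nonpositive eigenvalues, of
codimension `posCount T`, and likewise for `S` on `V'`; so the form of `T + S` is nonpositive on
`V ⊓ V'`, of codimension at most `posCount T + posCount S`. A subspace on which a form is
nonpositive meets the span of the positive eigenvectors only in `0`, which bounds
`posCount (T + S)`. Negative eigenvalues are handled through `-X`, whose characteristic
polynomial shows that `negCount X = posCount (-X)`.

For part (ii), diagonalize `W` and split its eigenvalues: `T` keeps at most `p` of the positive
and at most `q` of the negative ones, `S` keeps the others.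
-/

open scoped BigOperators ComplexConjugate
open Matrix

noncomputable section

/-- Number of strictly positive eigenvalues (with multiplicity) of a Hermitian matrix. -/
def posCount {n : ℕ} {𝕜 : Type*} [RCLike 𝕜] {X : Matrix (Fin n) (Fin n) 𝕜}
    (hX : X.IsHermitian) : ℕ :=
  Nat.card {i // 0 < hX.eigenvalues i}

/-- Number of strictly negative eigenvalues (with multiplicity) of a Hermitian matrix. -/
def negCount {n : ℕ} {𝕜 : Type*} [RCLike 𝕜] {X : Matrix (Fin n) (Fin n) 𝕜}
    (hX : X.IsHermitian) : ℕ :=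
  Nat.card {i // hX.eigenvalues i < 0}

/-- Nuclear norm of a Hermitian matrix: sum of absolute values of eigenvalues. -/
def nucNorm {n : ℕ} {𝕜 : Type*} [RCLike 𝕜] {X : Matrix (Fin n) (Fin n) 𝕜}
    (hX : X.IsHermitian) : ℝ :=
  ∑ i, |hX.eigenvalues i|

open scoped InnerProductSpace
open Module Submodule Polynomial Unitary Finset

namespace Finset

variable {α : Type*}

lemma exists_subset_card_le_card_sdiff_le [DecidableEq α] {s : Finset α} {p r : ℕ}
    (h : #s ≤ p + r) : ∃ t ⊆ s, #t ≤ p ∧ #(s \ t) ≤ r := by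
  obtain ⟨t, hts, ht⟩ := exists_subset_card_eq (min_le_right p #s)
  refine ⟨t, hts, ht ▸ min_le_left _ _, ?_⟩
  rw [card_sdiff_of_subset hts]
  omega

lemma exists_card_filter_le [Fintype α] [DecidableEq α] {P N : α → Prop} [DecidablePred P]
    [DecidablePred N] (hPN : ∀ a, P a → ¬ N a) {p q r s : ℕ} (hP : #{a | P a} ≤ p + r)
    (hN : #{a | N a} ≤ q + s) :
    ∃ t : Finset α, #{a ∈ t | P a} ≤ p ∧ #{a ∈ t | N a} ≤ q ∧
      #{a ∈ tᶜ | P a} ≤ r ∧ #{a ∈ tᶜ | N a} ≤ s := by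
  obtain ⟨t₁, ht₁, ht₁p, ht₁r⟩ := exists_subset_card_le_card_sdiff_le hP
  obtain ⟨t₂, ht₂, ht₂q, ht₂s⟩ := exists_subset_card_le_card_sdiff_le hN
  refine ⟨t₁ ∪ t₂, (card_le_card ?_).trans ht₁p, (card_le_card ?_).trans ht₂q,
    (card_le_card ?_).trans ht₁r, (card_le_card ?_).trans ht₂s⟩ <;>
  grind [mem_compl]

end Finset

section InnerProductSpace

variable {𝕜 E ι : Type*} [RCLike 𝕜] [NormedAddCommGroup E] [InnerProductSpace 𝕜 E]
  [Fintype ι]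

namespace OrthonormalBasis

lemma mem_span_image_iff (B : OrthonormalBasis ι 𝕜 E) {s : Set ι} {x : E} :
    x ∈ span 𝕜 (B '' s) ↔ ∀ i ∉ s, B.repr x i = 0 := by
  rw [← B.coe_toBasis, Basis.mem_span_image, Finsupp.support_subset_iff]
  simp only [B.coe_toBasis_repr_apply]

lemma finrank_span_image (B : OrthonormalBasis ι 𝕜 E) (s : Finset ι) :
    finrank 𝕜 (span 𝕜 (B '' s)) = #s := by
  classical
  have hB := B.orthonormal.linearIndependent
  have hind : LinearIndepOn 𝕜 id (B '' s) := (hB.linearIndepOn _).id_image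
  rw [← coe_image, finrank_span_finset_eq_card (by rwa [coe_image]),
    card_image_of_injective _ hB.injective]

end OrthonormalBasis

namespace LinearMap.IsSymmetric

variable {T : E →ₗ[𝕜] E} {d : ι → ℝ}

lemma re_inner_self_apply_eq_sum (hT : T.IsSymmetric) (B : OrthonormalBasis ι 𝕜 E)
    (hB : ∀ i, T (B i) = (d i : 𝕜) • B i) (x : E) :
    RCLike.re ⟪x, T x⟫_𝕜 = ∑ i, d i * ‖B.repr x i‖ ^ 2 := by
  have hrepr : ∀ i, B.repr (T x) i = d i * B.repr x i := fun i => by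
    rw [B.repr_apply_apply, B.repr_apply_apply, ← hT, hB, inner_smul_left, RCLike.conj_ofReal]
  rw [← B.repr.inner_map_map, EuclideanSpace.inner_eq_star_dotProduct, dotProduct, map_sum]
  refine sum_congr rfl fun i _ => ?_
  rw [hrepr, Pi.star_apply, RCLike.star_def, mul_assoc, RCLike.mul_conj, ← RCLike.ofReal_pow,
    ← RCLike.ofReal_mul, RCLike.ofReal_re]

lemma re_inner_self_apply_nonpos_of_mem_span (hT : T.IsSymmetric) (B : OrthonormalBasis ι 𝕜 E)
    (hB : ∀ i, T (B i) = (d i : 𝕜) • B i) {s : Set ι} (hs : ∀ i ∈ s, d i ≤ 0) {x : E}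
    (hx : x ∈ span 𝕜 (B '' s)) : RCLike.re ⟪x, T x⟫_𝕜 ≤ 0 := by
  rw [hT.re_inner_self_apply_eq_sum B hB]
  refine sum_nonpos fun i _ => ?_
  by_cases hi : i ∈ s
  · exact mul_nonpos_of_nonpos_of_nonneg (hs i hi) (by positivity)
  · simp [(B.mem_span_image_iff.mp hx) i hi]

lemma re_inner_self_apply_pos_of_mem_span (hT : T.IsSymmetric) (B : OrthonormalBasis ι 𝕜 E)
    (hB : ∀ i, T (B i) = (d i : 𝕜) • B i) {s : Set ι} (hs : ∀ i ∈ s, 0 < d i) {x : E}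
    (hx : x ∈ span 𝕜 (B '' s)) (hx₀ : x ≠ 0) : 0 < RCLike.re ⟪x, T x⟫_𝕜 := by
  rw [hT.re_inner_self_apply_eq_sum B hB]
  obtain ⟨j, hj⟩ : ∃ j, B.repr x j ≠ 0 := by
    by_contra! h
    exact hx₀ (B.repr.map_eq_zero_iff.mp (PiLp.ext h))
  have hjs : j ∈ s := by
    by_contra hjs
    exact hj ((B.mem_span_image_iff.mp hx) j hjs)
  refine sum_pos' (fun i _ => ?_) ⟨j, mem_univ j, by have := hs j hjs; positivity⟩
  by_cases hi : i ∈ s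
  · have := hs i hi
    positivity
  · simp [(B.mem_span_image_iff.mp hx) i hi]

end LinearMap.IsSymmetric

end InnerProductSpace

namespace Matrix

variable {𝕜 : Type*} [RCLike 𝕜] {m : Type*} [Fintype m] [DecidableEq m]

lemma IsHermitian.toEuclideanLin_eigenvectorBasis {A : Matrix m m 𝕜} (hA : A.IsHermitian)
    (i : m) :
    A.toEuclideanLin (hA.eigenvectorBasis i) =
      (hA.eigenvalues i : 𝕜) • hA.eigenvectorBasis i :=
  WithLp.ofLp_injective 2 <| by
    rw [ofLp_toLpLin, toLin'_apply, hA.mulVec_eigenvectorBasis, WithLp.ofLp_smul,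
      RCLike.real_smul_eq_coe_smul (K := 𝕜)]

lemma charpoly_conjStarAlgAut_diagonal (U : unitaryGroup m 𝕜) (d : m → ℝ) :
    (conjStarAlgAut 𝕜 _ U (diagonal (RCLike.ofReal ∘ d))).charpoly =
      ∏ i, (X - C (d i : 𝕜)) := by
  rw [conjStarAlgAut_apply, charpoly_mul_comm, ← Matrix.mul_assoc]
  simp [charpoly_diagonal]

lemma IsHermitian.map_eigenvalues_of_charpoly_eq {A : Matrix m m 𝕜} (hA : A.IsHermitian)
    {d : m → ℝ} (h : A.charpoly = ∏ i, (X - C (d i : 𝕜))) :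
    univ.val.map hA.eigenvalues = univ.val.map d := by
  have hroots := hA.roots_charpoly_eq_eigenvalues
  rw [h, roots_prod _ _ (prod_ne_zero_iff.mpr fun i _ => X_sub_C_ne_zero _)] at hroots
  simp only [roots_X_sub_C, Multiset.bind_singleton] at hroots
  simpa [Multiset.map_map] using congr(Multiset.map RCLike.re $hroots).symm

lemma IsHermitian.card_filter_eigenvalues_of_charpoly_eq {A : Matrix m m 𝕜}
    (hA : A.IsHermitian) {d : m → ℝ} (h : A.charpoly = ∏ i, (X - C (d i : 𝕜)))
    (P : ℝ → Prop) [DecidablePred P] :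
    #{i | P (hA.eigenvalues i)} = #{i | P (d i)} := by
  have := congr(Multiset.countP P $(hA.map_eigenvalues_of_charpoly_eq h))
  simp only [Multiset.countP_map] at this
  exact this

end Matrix

namespace Matrix.IsHermitian

variable {𝕜 : Type*} [RCLike 𝕜] {m : Type*} [Fintype m] [DecidableEq m]
  {A : Matrix m m 𝕜}

def eigenPart (hA : A.IsHermitian) (t : Finset m) : Matrix m m 𝕜 :=
  conjStarAlgAut 𝕜 _ hA.eigenvectorUnitary
    (diagonal (RCLike.ofReal ∘ (t : Set m).indicator hA.eigenvalues))

lemma isHermitian_eigenPart (hA : A.IsHermitian) (t : Finset m) :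
    (hA.eigenPart t).IsHermitian :=
  (isHermitian_diagonal_of_self_adjoint (RCLike.ofReal ∘ (t : Set m).indicator hA.eigenvalues)
    (funext fun _ => RCLike.conj_ofReal _)).isSelfAdjoint.map _

lemma eigenPart_add_eigenPart_compl (hA : A.IsHermitian) (t : Finset m) :
    hA.eigenPart t + hA.eigenPart tᶜ = A := by
  rw [eigenPart, eigenPart, ← map_add, diagonal_add, coe_compl]
  conv_rhs => rw [hA.spectral_theorem]
  congr 2
  funext i
  simp only [Function.comp_apply, ← RCLike.ofReal_add, Set.indicator_self_add_compl_apply]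

lemma card_filter_eigenvalues_eigenPart (hA : A.IsHermitian) (t : Finset m) (P : ℝ → Prop)
    [DecidablePred P] (hP : ¬ P 0) :
    #{i | P ((hA.isHermitian_eigenPart t).eigenvalues i)} = #{i ∈ t | P (hA.eigenvalues i)} := by
  refine (card_filter_eigenvalues_of_charpoly_eq _
    (charpoly_conjStarAlgAut_diagonal _ _) P).trans ?_
  congr 1
  ext i
  by_cases hi : i ∈ t <;> simp [hi, hP]

end Matrix.IsHermitian

section Inertia

variable {𝕜 : Type*} [RCLike 𝕜] {n : ℕ}

lemma posCount_eq_card {A : Matrix (Fin n) (Fin n) 𝕜} (hA : A.IsHermitian) :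
    posCount hA = #{i | 0 < hA.eigenvalues i} := by
  rw [posCount, Nat.card_eq_fintype_card, Fintype.card_subtype]

lemma negCount_eq_card {A : Matrix (Fin n) (Fin n) 𝕜} (hA : A.IsHermitian) :
    negCount hA = #{i | hA.eigenvalues i < 0} := by
  rw [negCount, Nat.card_eq_fintype_card, Fintype.card_subtype]

lemma posCount_add_finrank_le_of_nonpos {A : Matrix (Fin n) (Fin n) 𝕜} (hA : A.IsHermitian)
    {V : Submodule 𝕜 (EuclideanSpace 𝕜 (Fin n))}
    (hV : ∀ x ∈ V, RCLike.re ⟪x, A.toEuclideanLin x⟫_𝕜 ≤ 0) :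
    posCount hA + finrank 𝕜 V ≤ n := by
  let P := span 𝕜 (hA.eigenvectorBasis '' ↑({i | 0 < hA.eigenvalues i} : Finset (Fin n)))
  have hP : finrank 𝕜 P = posCount hA := by
    rw [posCount_eq_card, hA.eigenvectorBasis.finrank_span_image]
  have hdisj : Disjoint P V := by
    refine disjoint_def.mpr fun x hxP hxV => by_contra fun hx₀ => ?_
    refine (hV x hxV).not_gt ?_
    exact (isSymmetric_toEuclideanLin_iff.mpr hA).re_inner_self_apply_pos_of_mem_span _
      hA.toEuclideanLin_eigenvectorBasis (fun i hi => by simpa using hi) hxP hx₀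
  simpa [hP] using finrank_add_finrank_le_of_disjoint hdisj

lemma exists_posCount_add_finrank_eq_of_nonpos {A : Matrix (Fin n) (Fin n) 𝕜}
    (hA : A.IsHermitian) :
    ∃ V : Submodule 𝕜 (EuclideanSpace 𝕜 (Fin n)), posCount hA + finrank 𝕜 V = n ∧
      ∀ x ∈ V, RCLike.re ⟪x, A.toEuclideanLin x⟫_𝕜 ≤ 0 := by
  let s : Finset (Fin n) := {i | 0 < hA.eigenvalues i}
  refine ⟨span 𝕜 (hA.eigenvectorBasis '' ↑sᶜ), ?_, fun x hx => ?_⟩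
  · rw [hA.eigenvectorBasis.finrank_span_image, posCount_eq_card, card_add_card_compl,
      Fintype.card_fin]
  · exact (isSymmetric_toEuclideanLin_iff.mpr hA).re_inner_self_apply_nonpos_of_mem_span _
      hA.toEuclideanLin_eigenvectorBasis (fun i hi => by simpa [s] using hi) hx

lemma posCount_add_le {T S : Matrix (Fin n) (Fin n) 𝕜} (hT : T.IsHermitian)
    (hS : S.IsHermitian) (hTS : (T + S).IsHermitian) :
    posCount hTS ≤ posCount hT + posCount hS := by
  obtain ⟨V, hVdim, hV⟩ := exists_posCount_add_finrank_eq_of_nonpos hT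
  obtain ⟨V', hV'dim, hV'⟩ := exists_posCount_add_finrank_eq_of_nonpos hS
  have hinf := posCount_add_finrank_le_of_nonpos hTS (V := V ⊓ V') fun x hx => by
    rw [map_add, LinearMap.add_apply, inner_add_right, map_add]
    linarith [hV x hx.1, hV' x hx.2]
  have hsup := finrank_sup_add_finrank_inf_eq V V'
  have hle := (V ⊔ V').finrank_le
  rw [finrank_euclideanSpace_fin] at hle
  omega

lemma negCount_eq_posCount_neg {A : Matrix (Fin n) (Fin n) 𝕜} (hA : A.IsHermitian) :
    negCount hA = posCount hA.neg := by
  have hneg : (-A).charpoly = ∏ i, (X - C ((-hA.eigenvalues) i : 𝕜)) := by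
    rw [← Matrix.charpoly_conjStarAlgAut_diagonal hA.eigenvectorUnitary]
    conv_lhs => rw [hA.spectral_theorem]
    rw [← map_neg]
    congr 3
    rw [diagonal_neg]
    congr 1
    funext i
    simp
  rw [negCount_eq_card, posCount_eq_card, hA.neg.card_filter_eigenvalues_of_charpoly_eq hneg]
  simp

lemma negCount_add_le {T S : Matrix (Fin n) (Fin n) 𝕜} (hT : T.IsHermitian)
    (hS : S.IsHermitian) (hTS : (T + S).IsHermitian) :
    negCount hTS ≤ negCount hT + negCount hS := by
  rw [negCount_eq_posCount_neg, negCount_eq_posCount_neg, negCount_eq_posCount_neg]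
  convert posCount_add_le hT.neg hS.neg (neg_add T S ▸ hTS.neg) using 2
  exact neg_add T S

lemma posCount_eigenPart {A : Matrix (Fin n) (Fin n) 𝕜} (hA : A.IsHermitian)
    (t : Finset (Fin n)) :
    posCount (hA.isHermitian_eigenPart t) = #{i ∈ t | 0 < hA.eigenvalues i} := by
  rw [posCount_eq_card, hA.card_filter_eigenvalues_eigenPart t (0 < ·) (lt_irrefl 0)]

lemma negCount_eigenPart {A : Matrix (Fin n) (Fin n) 𝕜} (hA : A.IsHermitian)
    (t : Finset (Fin n)) :
    negCount (hA.isHermitian_eigenPart t) = #{i ∈ t | hA.eigenvalues i < 0} := by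
  rw [negCount_eq_card, hA.card_filter_eigenvalues_eigenPart t (· < 0) (lt_irrefl 0)]

lemma exists_eq_add_of_posCount_le_of_negCount_le {p q r s : ℕ} {W : Matrix (Fin n) (Fin n) 𝕜}
    (hW : W.IsHermitian) (hp : posCount hW ≤ p + r) (hq : negCount hW ≤ q + s) :
    ∃ (T S : Matrix (Fin n) (Fin n) 𝕜) (hT : T.IsHermitian) (hS : S.IsHermitian),
      W = T + S ∧ posCount hT ≤ p ∧ negCount hT ≤ q ∧
        posCount hS ≤ r ∧ negCount hS ≤ s := by
  rw [posCount_eq_card] at hp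
  rw [negCount_eq_card] at hq
  obtain ⟨t, htp, htq, htr, hts⟩ := exists_card_filter_le (fun _ h => h.not_gt) hp hq
  refine ⟨_, _, hW.isHermitian_eigenPart t, hW.isHermitian_eigenPart tᶜ,
    (hW.eigenPart_add_eigenPart_compl t).symm, ?_, ?_, ?_, ?_⟩ <;>
  simpa only [posCount_eigenPart, negCount_eigenPart]

end Inertia

/-- `S^{p,q} + S^{r,s} = S^{p+r,q+s}`:
(i) a sum of a Hermitian matrix with at most `p` positive / `q` negative eigenvalues and one
with at most `r` positive / `s` negative eigenvalues has at most `p+r` positive and `q+s`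
negative eigenvalues; (ii) conversely every Hermitian matrix with at most `p+r` positive and
`q+s` negative eigenvalues splits as such a sum. -/
theorem stmt6 (n p q r s : ℕ) :
    (∀ (T S : Matrix (Fin n) (Fin n) ℂ) (hT : T.IsHermitian) (hS : S.IsHermitian)
        (hTS : (T + S).IsHermitian),
        posCount hT ≤ p → negCount hT ≤ q → posCount hS ≤ r → negCount hS ≤ s →
        posCount hTS ≤ p + r ∧ negCount hTS ≤ q + s)
    ∧ (∀ (W : Matrix (Fin n) (Fin n) ℂ) (hW : W.IsHermitian),
        posCount hW ≤ p + r → negCount hW ≤ q + s →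
        ∃ (T S : Matrix (Fin n) (Fin n) ℂ) (hT : T.IsHermitian) (hS : S.IsHermitian),
          W = T + S ∧ posCount hT ≤ p ∧ negCount hT ≤ q ∧
            posCount hS ≤ r ∧ negCount hS ≤ s) :=
  ⟨fun T S hT hS hTS hp hq hr hs =>
    ⟨(posCount_add_le hT hS hTS).trans (add_le_add hp hr),
      (negCount_add_le hT hS hTS).trans (add_le_add hq hs)⟩,
    fun _ hW => exists_eq_add_of_posCount_le_of_negCount_le hW⟩
end
end

section
/- Let u, v ∈ ℂⁿ (n ≥ 2) and T = [u,v] = ½(uv* + vu*). Then: tr T = Re⟨u,v⟩; tr(T²) = ½( ‖u‖²‖v‖² + (Re⟨u,v⟩)² − (Im⟨u,v⟩)² ); the eigenvalues of T (with multiplicity) are a₊, a₋ and 0 repeated n−2 times, where a₊ = ½( Re⟨u,v⟩ + √( ‖u‖²‖v‖² − (Im⟨u,v⟩)² ) ) ≥ 0 and a₋ = ½( Re⟨u,v⟩ − √( ‖u‖²‖v‖² − (Im⟨u,v⟩)² ) ) ≤ 0; and the nuclear norm satisfies ‖T‖₁ = a₊ + |a₋| = √( ‖u‖²‖v‖² −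 (Im⟨u,v⟩)² ). In particular T has at most one positive and at most one negative eigenvalue. -/
open scoped BigOperators ComplexConjugate
open Matrix

noncomputable section

/-- Rank-one operator `u v*`, with entries `uᵢ conj(vⱼ)`. -/
def outer {n : ℕ} (u v : Fin n → ℂ) : Matrix (Fin n) (Fin n) ℂ :=
  Matrix.vecMulVec u (star v)

/-- Symmetric outer product `[u,v] = ½(uv* + vu*)`. -/
def symOuter {n : ℕ} (u v : Fin n → ℂ) : Matrix (Fin n) (Fin n) ℂ :=
  (1/2 : ℂ) • (outer u v + outer v u)

/-!
`T` is half the sum of the rank-one matrices `u v*` and `v u*`, so it has rank at most two and its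
eigenvalues are some `x, y` together with `n - 2` zeros. The traces `tr T = x + y` and
`tr T² = x² + y²` determine `x + y = Re⟨u,v⟩` and `x y = (Re⟨u,v⟩² - D) / 4` with
`D = ‖u‖²‖v‖² - Im⟨u,v⟩²`, so `{x, y} = {a₊, a₋}`. Cauchy–Schwarz gives `Re⟨u,v⟩² ≤ D`, hence
`a₊ ≥ 0 ≥ a₋` and `‖T‖₁ = a₊ - a₋ = √D`.
-/

open Finset

theorem Matrix.rank_add_le {K m n : Type*} [Field K] [Fintype m] [Fintype n]
    (A B : Matrix m n K) : (A + B).rank ≤ A.rank + B.rank := by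
  rw [rank, mulVecLin_add]
  exact (Submodule.finrank_mono (LinearMap.range_add_le _ _)).trans
    (Submodule.finrank_add_le_finrank_add_finrank _ _)

theorem Matrix.IsHermitian.trace_pow_eq_sum_eigenvalues_pow {ι 𝕜 : Type*} [Fintype ι]
    [DecidableEq ι] [RCLike 𝕜] {A : Matrix ι ι 𝕜} (hA : A.IsHermitian) (k : ℕ) :
    (A ^ k).trace = ∑ i, (hA.eigenvalues i : 𝕜) ^ k := by
  conv_lhs => rw [hA.spectral_theorem, ← map_pow]
  rw [Unitary.conjStarAlgAut_apply, trace_mul_comm, ← mul_assoc,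
    Unitary.coe_star_mul_self, one_mul, diagonal_pow, trace_diagonal]
  rfl

namespace Multiset

variable {α : Type*}

theorem exists_eq_pair_add_replicate [DecidableEq α] {M : Multiset α} (z : α)
    (hM : 2 ≤ card M) (hz : card (M.filter (· ≠ z)) ≤ 2) :
    ∃ x y, M = {x, y} + replicate (card M - 2) z := by
  set F := M.filter (· ≠ z)
  have hsplit : M = F + replicate (count z M) z := by
    rw [← filter_eq', add_comm]
    exact (filter_add_not (· = z) M).symm
  have hcard : card M = card F + count z M := by
    conv_lhs => rw [hsplit]
    rw [card_add, card_replicate]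
  obtain ⟨x, y, hxy⟩ := card_eq_two.mp
    (show card (F + replicate (2 - card F) z) = 2 by rw [card_add, card_replicate]; omega)
  refine ⟨x, y, ?_⟩
  rw [← hxy, add_assoc, ← replicate_add]
  convert hsplit using 3
  omega

theorem pair_eq_pair_of_add_eq_of_mul_eq {R : Type*} [CommRing R] [NoZeroDivisors R]
    {x y a b : R} (hsum : x + y = a + b) (hprod : x * y = a * b) :
    ({x, y} : Multiset R) = {a, b} := by
  have hy : y = a + b - x := by rw [← hsum]; ring
  have : (x - a) * (x - b) = 0 := by rw [hy] at hprod; linear_combination -hprod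
  rcases mul_eq_zero.mp this with h | h
  · rw [hy, sub_eq_zero.mp h, add_sub_cancel_left]
  · rw [hy, sub_eq_zero.mp h, add_sub_cancel_right, pair_comm]

theorem card_filter_pair_add_replicate_le_one (p : α → Prop) [DecidablePred p] {a b z : α}
    (hb : ¬ p b) (hz : ¬ p z) (k : ℕ) :
    card (filter p ({a, b} + replicate k z)) ≤ 1 := by
  have hzeros : filter p (replicate k z) = 0 :=
    filter_eq_nil.mpr fun x hx => eq_of_mem_replicate hx ▸ hz
  rw [filter_add, hzeros, add_zero, insert_eq_cons, filter_cons, filter_singleton, if_neg hb]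
  split_ifs <;> simp

end Multiset

namespace Matrix.IsHermitian

variable {ι 𝕜 : Type*} [Fintype ι] [DecidableEq ι] [RCLike 𝕜] {A : Matrix ι ι 𝕜}

theorem exists_eigenvalues_eq_pair_add_replicate_zero (hA : A.IsHermitian)
    (hι : 2 ≤ Fintype.card ι) (hrank : A.rank ≤ 2) :
    ∃ x y : ℝ, univ.val.map hA.eigenvalues = {x, y} + Multiset.replicate (Fintype.card ι - 2) 0
      ∧ A.trace = ((x + y : ℝ) : 𝕜) ∧ (A ^ 2).trace = ((x ^ 2 + y ^ 2 : ℝ) : 𝕜) := by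
  have hnonzero : Multiset.card ((univ.val.map hA.eigenvalues).filter (· ≠ 0)) ≤ 2 := by
    rw [Multiset.filter_map, Multiset.card_map, ← Finset.filter_val, Finset.card_val,
      ← Fintype.card_subtype]
    simpa [hA.rank_eq_card_non_zero_eigs] using hrank
  obtain ⟨x, y, hxy⟩ := Multiset.exists_eq_pair_add_replicate 0 (by simpa using hι) hnonzero
  rw [Multiset.card_map, card_val, card_univ] at hxy
  refine ⟨x, y, hxy, ?_, ?_⟩
  · rw [hA.trace_eq_sum_eigenvalues, ← RCLike.ofReal_sum, sum_eq_multiset_sum, hxy]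
    simp
  · rw [hA.trace_pow_eq_sum_eigenvalues_pow]
    simp_rw [← RCLike.ofReal_pow, ← RCLike.ofReal_sum]
    rw [sum_eq_multiset_sum, ← Function.comp_def (· ^ 2), ← Multiset.map_map, hxy]
    simp

end Matrix.IsHermitian

section SpectralCounts

variable {n : ℕ} {𝕜 : Type*} [RCLike 𝕜] {X : Matrix (Fin n) (Fin n) 𝕜} (hX : X.IsHermitian)

lemma nucNorm_eq_sum_map_abs : nucNorm hX = ((univ.val.map hX.eigenvalues).map abs).sum := by
  rw [Multiset.map_map]
  rfl

lemma posCount_eq_card_filter :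
    posCount hX = Multiset.card ((univ.val.map hX.eigenvalues).filter (0 < ·)) := by
  rw [posCount, Nat.card_eq_fintype_card, Fintype.card_subtype, Multiset.filter_map,
    Multiset.card_map]
  rfl

lemma negCount_eq_card_filter :
    negCount hX = Multiset.card ((univ.val.map hX.eigenvalues).filter (· < 0)) := by
  rw [negCount, Nat.card_eq_fintype_card, Fintype.card_subtype, Multiset.filter_map,
    Multiset.card_map]
  rfl

end SpectralCounts

section SymOuter

variable {n : ℕ} (u v : Fin n → ℂ)

lemma cip_comm : cip v u = conj (cip u v) := by
  simp [cip, map_sum, mul_comm]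

lemma cip_self : cip u u = cnSq u := by
  simp [cip, cnSq, Complex.normSq_eq_conj_mul_self, mul_comm]

lemma normSq_cip_le : Complex.normSq (cip u v) ≤ cnSq u * cnSq v := by
  have hcip : cip u v = inner ℂ (WithLp.toLp 2 v) (WithLp.toLp 2 u) := rfl
  have hnorm (w : Fin n → ℂ) : cnSq w = ‖WithLp.toLp 2 w‖ ^ 2 := by
    simp [cnSq, EuclideanSpace.norm_sq_eq, Complex.sq_norm]
  rw [← Complex.sq_norm, hcip, hnorm, hnorm, ← mul_pow, mul_comm]
  exact pow_le_pow_left₀ (norm_nonneg _) (norm_inner_le_norm _ _) 2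

lemma re_cip_sq_le : (cip u v).re ^ 2 ≤ cnSq u * cnSq v - (cip u v).im ^ 2 := by
  linarith [normSq_cip_le u v, Complex.normSq_apply (cip u v)]

lemma trace_outer : (outer u v).trace = cip u v := by
  simp [outer, trace, vecMulVec_apply, cip]

lemma trace_outer_mul_outer (a b c d : Fin n → ℂ) :
    (outer a b * outer c d).trace = cip c b * cip a d := by
  simp only [trace, Matrix.diag, mul_apply, outer, vecMulVec_apply, Pi.star_apply, cip, sum_mul,
    mul_sum, Complex.star_def]
  exact sum_congr rfl fun j _ => sum_congr rfl fun i _ => by ring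

lemma trace_symOuter : (symOuter u v).trace = (cip u v).re := by
  rw [symOuter, trace_smul, trace_add, trace_outer, trace_outer, cip_comm u v, Complex.add_conj]
  simp

lemma trace_symOuter_sq : (symOuter u v ^ 2).trace
    = (((1/2 : ℝ) * (cnSq u * cnSq v + (cip u v).re ^ 2 - (cip u v).im ^ 2) : ℝ) : ℂ) := by
  simp only [sq, symOuter, Matrix.smul_mul, Matrix.mul_smul, trace_smul, add_mul, mul_add,
    trace_add, smul_eq_mul, trace_outer_mul_outer, cip_self, cip_comm u v]
  apply Complex.ext <;> simp <;> ring

lemma rank_symOuter_le_two : (symOuter u v).rank ≤ 2 := by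
  rw [symOuter, rank_smul_of_mem_nonZeroDivisors _ (mem_nonZeroDivisors_of_ne_zero (by norm_num))]
  exact (rank_add_le _ _).trans (add_le_add (rank_vecMulVec_le _ _) (rank_vecMulVec_le _ _))

end SymOuter

/-- For `T = [u,v] = ½(uv* + vu*)` with `n ≥ 2`:
`tr T = Re⟨u,v⟩`; `tr T² = ½(‖u‖²‖v‖² + (Re⟨u,v⟩)² − (Im⟨u,v⟩)²)`; the eigenvalues of `T`
are `a₊ ≥ 0`, `a₋ ≤ 0` and `0` repeated `n−2` times, with
`a± = ½(Re⟨u,v⟩ ± √(‖u‖²‖v‖² − (Im⟨u,v⟩)²))`; and `‖T‖₁ = a₊ + |a₋| =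
√(‖u‖²‖v‖² − (Im⟨u,v⟩)²)`. In particular `T` has at most one positive and at most one
negative eigenvalue. -/
theorem stmt8 (n : ℕ) (hn : 2 ≤ n) (u v : Fin n → ℂ)
    (hT : (symOuter u v).IsHermitian)
    (ap am : ℝ)
    (hap : ap = (1/2 : ℝ) * ((cip u v).re + Real.sqrt (cnSq u * cnSq v - (cip u v).im ^ 2)))
    (ham : am = (1/2 : ℝ) * ((cip u v).re - Real.sqrt (cnSq u * cnSq v - (cip u v).im ^ 2))) :
    (symOuter u v).trace = ((cip u v).re : ℂ)
    ∧ (symOuter u v * symOuter u v).trace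
        = (((1/2 : ℝ) * (cnSq u * cnSq v + (cip u v).re ^ 2 - (cip u v).im ^ 2) : ℝ) : ℂ)
    ∧ 0 ≤ ap ∧ am ≤ 0
    ∧ Multiset.map hT.eigenvalues Finset.univ.val
        = ({ap, am} : Multiset ℝ) + Multiset.replicate (n - 2) 0
    ∧ nucNorm hT = ap + |am|
    ∧ nucNorm hT = Real.sqrt (cnSq u * cnSq v - (cip u v).im ^ 2)
    ∧ posCount hT ≤ 1 ∧ negCount hT ≤ 1 := by
  have hre := re_cip_sq_le u v
  have hP := Real.sq_sqrt ((sq_nonneg _).trans hre)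
  have habs := Real.abs_le_sqrt hre
  have hap0 : 0 ≤ ap := by rw [hap]; linarith [neg_abs_le (cip u v).re]
  have ham0 : am ≤ 0 := by rw [ham]; linarith [le_abs_self (cip u v).re]
  obtain ⟨x, y, hxy, hsum, hsq⟩ := hT.exists_eigenvalues_eq_pair_add_replicate_zero
    (by simpa using hn) (rank_symOuter_le_two u v)
  replace hsum : (cip u v).re = x + y :=
    Complex.ofReal_injective (by rw [← trace_symOuter]; exact hsum)
  replace hsq :
      (1/2 : ℝ) * (cnSq u * cnSq v + (cip u v).re ^ 2 - (cip u v).im ^ 2) = x ^ 2 + y ^ 2 :=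
    Complex.ofReal_injective (by rw [← trace_symOuter_sq]; exact hsq)
  have heig : univ.val.map hT.eigenvalues = {ap, am} + Multiset.replicate (n - 2) 0 := by
    rw [hxy, Fintype.card_fin, Multiset.pair_eq_pair_of_add_eq_of_mul_eq (a := ap) (b := am)]
    · rw [hap, ham]; linarith
    · -- x y = ((x + y)² - (x² + y²)) / 2
      rw [hap, ham]
      linear_combination (-(x + y + (cip u v).re) / 2) * hsum + (1/2) * hsq + (1/4) * hP
  have hnuc : nucNorm hT = ap + |am| := by
    rw [nucNorm_eq_sum_map_abs, heig]
    simp [abs_of_nonneg hap0]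
  refine ⟨trace_symOuter u v, sq (symOuter u v) ▸ trace_symOuter_sq u v, hap0, ham0, heig, hnuc,
    ?_, ?_, ?_⟩
  · rw [hnuc, abs_of_nonpos ham0, hap, ham]
    ring
  · rw [posCount_eq_card_filter, heig]
    exact Multiset.card_filter_pair_add_replicate_le_one (0 < ·) ham0.not_gt (lt_irrefl 0) _
  · rw [negCount_eq_card_filter, heig, Multiset.pair_comm]
    exact Multiset.card_filter_pair_add_replicate_le_one (· < 0) hap0.not_gt (lt_irrefl 0) _
end
end

section
/- Let u₀, v₀ ∈ ℂⁿ be linearly independent with T = [u₀,v₀] having exactly one positive and one negative eigenvalue. For u, v ∈ ℂⁿ defined by u = a₁₁u₀ + a₁₂v₀ and v = a₂₁u₀ + a₂₂v₀ for a 2×2 complex matrix A = (a_{kl}), one has [u,v] = [u₀,v₀] if and only if A* K A = K, where K = [[0,1],[1,0]]. Moreover every pair (u,v) with [u,v] = [u₀,v₀] arises this way from some A with A* K A = K. -/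
open scoped BigOperators ComplexConjugate
open Matrix

noncomputable section

/-!
Encode a pair `(u, v)` as the `2 × n` matrix `R` with rows `u, v`. Then `[u, v] = ½ (Rᴴ K R)ᵀ`,
and the pair `(A₀₀ u₀ + A₀₁ v₀, A₁₀ u₀ + A₁₁ v₀)` has matrix `A R₀`. Linear independence of
`u₀, v₀` gives a right inverse `N` of `R₀`, so `X ↦ R₀ᴴ X R₀` is injective; this yields the
equivalence with `Aᴴ K A = K`. Conversely, if `Rᴴ K R = R₀ᴴ K R₀`, multiplying by `N` and using
that `K` is invertible writes `R₀ = E R` with `E (R N) = 1`; as `E` is square, also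
`(R N) E = 1`, hence `R = (R N) R₀`.
-/

namespace Matrix

variable {α m n : Type*}

theorem of_smul_add_smul_eq_mul [CommSemiring α] (A : Matrix (Fin 2) (Fin 2) α)
    (x y : n → α) :
    of ![A 0 0 • x + A 0 1 • y, A 1 0 • x + A 1 1 • y] = A * of ![x, y] := by
  ext i j
  fin_cases i <;> simp [mul_apply, Fin.sum_univ_two]

variable [Fintype m] [Fintype n]

theorem exists_mul_eq_one_of_linearIndependent_row [Field α] [DecidableEq m] {M : Matrix m n α}
    (h : LinearIndependent α M.row) : ∃ N : Matrix n m α, M * N = 1 := by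
  classical
  have hinj : Function.Injective Mᵀ.mulVec := by
    rwa [mulVec_injective_iff, col_transpose]
  obtain ⟨g, hg⟩ :=
    LinearMap.exists_leftInverse_of_injective Mᵀ.mulVecLin (LinearMap.ker_eq_bot.mpr hinj)
  refine ⟨(LinearMap.toMatrix' g)ᵀ, ?_⟩
  rw [← transpose_inj, transpose_mul, transpose_transpose, transpose_one]
  apply Matrix.toLin'.injective
  rw [toLin'_mul, toLin'_toMatrix', toLin'_one]
  exact hg

theorem conjTranspose_mul_mul_cancel_iff [Semiring α] [StarRing α] [DecidableEq m]
    {M : Matrix m n α} {N : Matrix n m α} (hMN : M * N = 1) {X Y : Matrix m m α} :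
    Mᴴ * X * M = Mᴴ * Y * M ↔ X = Y := by
  refine ⟨fun h => ?_, fun h => h ▸ rfl⟩
  have recover : ∀ Z : Matrix m m α, Nᴴ * (Mᴴ * Z * M) * N = Z := fun Z => by
    rw [show Nᴴ * (Mᴴ * Z * M) * N = (M * N)ᴴ * Z * (M * N) by
      simp only [conjTranspose_mul, Matrix.mul_assoc], hMN, conjTranspose_one,
      Matrix.one_mul, Matrix.mul_one]
  rw [← recover X, h, recover]

theorem mul_mul_eq_of_conjTranspose_mul_mul_eq [CommRing α] [StarRing α] [DecidableEq m]
    {R R₀ : Matrix m n α} {N : Matrix n m α} (hN : R₀ * N = 1) {G : Matrix m m α}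
    (hG : IsUnit G) (h : Rᴴ * G * R = R₀ᴴ * G * R₀) : R * N * R₀ = R := by
  obtain ⟨U, hU⟩ := hG.star
  have hR₀ : Gᴴ * R₀ = (G * R * N)ᴴ * R := by
    have := congrArg (fun X => (X * N)ᴴ) h
    simp only [Matrix.mul_assoc, hN, Matrix.mul_one, conjTranspose_mul] at this
    simpa only [conjTranspose_mul, conjTranspose_conjTranspose, Matrix.mul_assoc] using this.symm
  set E := (↑U⁻¹ : Matrix m m α) * (G * R * N)ᴴ
  have hE : R₀ = E * R := by
    rw [Matrix.mul_assoc, ← hR₀, ← star_eq_conjTranspose, ← hU, ← Matrix.mul_assoc, U.inv_mul,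
      Matrix.one_mul]
  have hEinv : R * N * E = 1 := mul_eq_one_comm.mp (by rw [← Matrix.mul_assoc, ← hE, hN])
  rw [hE, ← Matrix.mul_assoc, hEinv, Matrix.one_mul]

end Matrix

theorem symOuter_eq_smul_transpose {n : ℕ} (u v : Fin n → ℂ) :
    symOuter u v = (1 / 2 : ℂ) • ((of ![u, v])ᴴ * !![(0 : ℂ), 1; 1, 0] * of ![u, v])ᵀ := by
  ext i j
  simp [symOuter, outer, mul_apply, Fin.sum_univ_two, vecMulVec_apply]

theorem symOuter_eq_symOuter_iff {n : ℕ} (u v u' v' : Fin n → ℂ) :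
    symOuter u v = symOuter u' v' ↔
      (of ![u, v])ᴴ * !![(0 : ℂ), 1; 1, 0] * of ![u, v] =
        (of ![u', v'])ᴴ * !![(0 : ℂ), 1; 1, 0] * of ![u', v'] := by
  rw [symOuter_eq_smul_transpose, symOuter_eq_smul_transpose, smul_right_inj (by norm_num),
    transpose_inj]

theorem symOuter_smul_add_smul_eq_iff {n : ℕ} {u₀ v₀ : Fin n → ℂ}
    (hli : LinearIndependent ℂ ![u₀, v₀]) (A : Matrix (Fin 2) (Fin 2) ℂ) :
    symOuter (A 0 0 • u₀ + A 0 1 • v₀) (A 1 0 • u₀ + A 1 1 • v₀) = symOuter u₀ v₀ ↔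
      Aᴴ * !![(0 : ℂ), 1; 1, 0] * A = !![(0 : ℂ), 1; 1, 0] := by
  obtain ⟨N, hN⟩ := exists_mul_eq_one_of_linearIndependent_row (M := of ![u₀, v₀]) hli
  rw [symOuter_eq_symOuter_iff, of_smul_add_smul_eq_mul, conjTranspose_mul,
    show (of ![u₀, v₀])ᴴ * Aᴴ * !![(0 : ℂ), 1; 1, 0] * (A * of ![u₀, v₀]) =
      (of ![u₀, v₀])ᴴ * (Aᴴ * !![(0 : ℂ), 1; 1, 0] * A) * of ![u₀, v₀] by
        simp only [Matrix.mul_assoc],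
    conjTranspose_mul_mul_cancel_iff hN]

theorem exists_smul_add_smul_of_symOuter_eq {n : ℕ} {u₀ v₀ u v : Fin n → ℂ}
    (hli : LinearIndependent ℂ ![u₀, v₀]) (h : symOuter u v = symOuter u₀ v₀) :
    ∃ A : Matrix (Fin 2) (Fin 2) ℂ,
      u = A 0 0 • u₀ + A 0 1 • v₀ ∧ v = A 1 0 • u₀ + A 1 1 • v₀ := by
  obtain ⟨N, hN⟩ := exists_mul_eq_one_of_linearIndependent_row (M := of ![u₀, v₀]) hli
  have hK : IsUnit !![(0 : ℂ), 1; 1, 0] :=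
    IsUnit.of_mul_eq_one !![(0 : ℂ), 1; 1, 0] (by simp [one_fin_two])
  have hR := mul_mul_eq_of_conjTranspose_mul_mul_eq hN hK ((symOuter_eq_symOuter_iff ..).mp h)
  rw [← of_smul_add_smul_eq_mul] at hR
  exact ⟨_, congrFun (of.injective hR) 0 |>.symm, congrFun (of.injective hR) 1 |>.symm⟩

theorem stmt9_general (n : ℕ) (u₀ v₀ : Fin n → ℂ)
    (hli : LinearIndependent ℂ ![u₀, v₀]) :
    (∀ A : Matrix (Fin 2) (Fin 2) ℂ,
        symOuter (A 0 0 • u₀ + A 0 1 • v₀) (A 1 0 • u₀ + A 1 1 • v₀) = symOuter u₀ v₀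
          ↔ Aᴴ * !![(0 : ℂ), 1; 1, 0] * A = !![(0 : ℂ), 1; 1, 0])
    ∧ (∀ u v : Fin n → ℂ, symOuter u v = symOuter u₀ v₀ →
        ∃ A : Matrix (Fin 2) (Fin 2) ℂ,
          Aᴴ * !![(0 : ℂ), 1; 1, 0] * A = !![(0 : ℂ), 1; 1, 0] ∧
          u = A 0 0 • u₀ + A 0 1 • v₀ ∧ v = A 1 0 • u₀ + A 1 1 • v₀) := by
  refine ⟨symOuter_smul_add_smul_eq_iff hli, fun u v h => ?_⟩
  obtain ⟨A, hu, hv⟩ := exists_smul_add_smul_of_symOuter_eq hli h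
  refine ⟨A, (symOuter_smul_add_smul_eq_iff hli A).mp ?_, hu, hv⟩
  rwa [← hu, ← hv]

/-- Let `u₀, v₀` be linearly independent with `T = [u₀,v₀]` having exactly
one positive and one negative eigenvalue. For `u = a₁₁u₀ + a₁₂v₀`, `v = a₂₁u₀ + a₂₂v₀`
one has `[u,v] = [u₀,v₀]` iff `A* K A = K` with `K = [[0,1],[1,0]]`; and every pair with
`[u,v] = [u₀,v₀]` arises this way. -/
theorem stmt9 (n : ℕ) (u₀ v₀ : Fin n → ℂ)
    (hli : LinearIndependent ℂ ![u₀, v₀])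
    (hT : (symOuter u₀ v₀).IsHermitian)
    (hpos : posCount hT = 1) (hneg : negCount hT = 1) :
    (∀ A : Matrix (Fin 2) (Fin 2) ℂ,
        symOuter (A 0 0 • u₀ + A 0 1 • v₀) (A 1 0 • u₀ + A 1 1 • v₀) = symOuter u₀ v₀
          ↔ Aᴴ * !![(0 : ℂ), 1; 1, 0] * A = !![(0 : ℂ), 1; 1, 0])
    ∧ (∀ u v : Fin n → ℂ, symOuter u v = symOuter u₀ v₀ →
        ∃ A : Matrix (Fin 2) (Fin 2) ℂ,
          Aᴴ * !![(0 : ℂ), 1; 1, 0] * A = !![(0 : ℂ), 1; 1, 0] ∧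
          u = A 0 0 • u₀ + A 0 1 • v₀ ∧ v = A 1 0 • u₀ + A 1 1 • v₀) :=
  stmt9_general n u₀ v₀ hli
end
end
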